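/- arXiv:1512.00333 — 7 statements merged into one kernel-verified Lean document; each statement's English description precedes it below -/
import Mathlib

section
/- The boundary B_q of the q-T-fractal △_q contains exactly 2^q edges, and every vertex of △_q is incident with some edge of B_q; moreover B_q forms a σ-τ path visiting all vertices of △_q. -/
/-- Auxiliary adjacency: `b = a + 2^(q-i)` for some `i ≤ q` with `2^(q-i) ∣ a`.
These are exactly the (directed versions of the) edges of the `q`-T-fractal,
where the boundary `B_i` consists of the edges at scale `2^(q-i)`. -/
def fracAdjAux (q a b : ℕ) : Prop :=
  ∃ i ≤ q, 2 ^ (q - i) ∣ a ∧ b = a + 2 ^ (q - i)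

/-- The `q`-T-fractal, realized on the vertex set `{0, 1, …, 2^q}` (the vertices of the
outermost boundary path): the left copy of `△_{q-1}` lives on `{0,…,2^{q-1}}`, the right
copy on `{2^{q-1},…,2^q}`, and `{0, 2^q}` is the extra edge; `σ = 0` and `τ = 2^q`. -/
def TFractal (q : ℕ) : SimpleGraph (Fin (2 ^ q + 1)) where
  Adj a b := fracAdjAux q a.val b.val ∨ fracAdjAux q b.val a.val
  symm := ⟨fun _ _ h => h.symm⟩
  loopless := by
    constructor
    intro a h
    rcases h with ⟨i, _, _, h⟩ | ⟨i, _, _, h⟩ <;>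
      · have := Nat.two_pow_pos (q - i)
        omega

/-- The special vertex `σ` of the `q`-T-fractal. -/
def sigV (q : ℕ) : Fin (2 ^ q + 1) := ⟨0, Nat.succ_pos _⟩

/-- The special vertex `τ` of the `q`-T-fractal. -/
def tauV (q : ℕ) : Fin (2 ^ q + 1) := ⟨2 ^ q, Nat.lt_succ_self _⟩

/-- The boundary `B_i` of the `q`-T-fractal: the edges created in round `i`,
i.e. the edges `{a, a + 2^(q-i)}` with `2^(q-i) ∣ a`. -/
def boundaryB (q i : ℕ) : Set (Sym2 (Fin (2 ^ q + 1))) :=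
  { e | ∃ a b : Fin (2 ^ q + 1),
      e = s(a, b) ∧ 2 ^ (q - i) ∣ a.val ∧ b.val = a.val + 2 ^ (q - i) }

/-- `C` is a `σ`-`τ` edge cut in the `q`-T-fractal. -/
def IsSTCut (q : ℕ) (C : Set (Sym2 (Fin (2 ^ q + 1)))) : Prop :=
  ¬ ((TFractal q).deleteEdges C).Reachable (sigV q) (tauV q)

/-- `C` is a minimum `σ`-`τ` edge cut in the `q`-T-fractal. -/
def MinSTCut (q : ℕ) (C : Set (Sym2 (Fin (2 ^ q + 1)))) : Prop :=
  C ⊆ (TFractal q).edgeSet ∧ IsSTCut q C ∧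
    ∀ C' ⊆ (TFractal q).edgeSet, IsSTCut q C' → C.ncard ≤ C'.ncard

/-!
The outer boundary `B_q` consists of the edges `{a, a + 1}`, so it is the edge set of the path
graph `0 — 1 — ⋯ — 2^q`, which is a subgraph of `△_q`. The walk `0 → 1 → ⋯ → 2^q` along it is
therefore a Hamiltonian `σ`-`τ` path of `△_q` with edge set `B_q`; being a path on `2^q + 1`
vertices it has `2^q` distinct edges, and every vertex lies on one of them.
-/

namespace SimpleGraph

theorem Walk.IsTrail.ncard_edgeSet {V : Type*} {G : SimpleGraph V} {u v : V} {p : G.Walk u v}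
    (hp : p.IsTrail) : p.edgeSet.ncard = p.length := by
  classical
  rw [Walk.edgeSet, ← List.coe_toFinset, Set.ncard_coe_finset,
    List.toFinset_card_of_nodup hp.edges_nodup, Walk.length_edges]

namespace pathGraph

variable {n : ℕ}

def walkUpTo (n : ℕ) : (k : ℕ) → (hk : k ≤ n) → (pathGraph (n + 1)).Walk 0 ⟨k, by omega⟩
  | 0, _ => .nil
  | k + 1, hk => (walkUpTo n k (by omega)).concat (pathGraph_adj.2 (Or.inl rfl))

theorem map_val_support_walkUpTo (k : ℕ) (hk : k ≤ n) :
    (walkUpTo n k hk).support.map Fin.val = List.range (k + 1) := by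
  induction k with
  | zero => rfl
  | succ k ih => simp [walkUpTo, ih, List.range_succ]

theorem mem_edges_walkUpTo (k : ℕ) (hk : k ≤ n) (e : Sym2 (Fin (n + 1))) :
    e ∈ (walkUpTo n k hk).edges ↔ e ∈ (pathGraph (n + 1)).edgeSet ∧ ∀ v ∈ e, v.val ≤ k := by
  induction e using Sym2.ind with | h a b => ?_
  induction k with
  | zero =>
    refine iff_of_false List.not_mem_nil ?_
    simp only [mem_edgeSet, pathGraph_adj, Sym2.mem_iff, forall_eq_or_imp, forall_eq]
    omega
  | succ k ih =>
    simp only [walkUpTo, Walk.edges_concat, List.concat_eq_append, List.mem_append, ih,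
      List.mem_singleton, mem_edgeSet, pathGraph_adj, Sym2.mem_iff, forall_eq_or_imp, forall_eq,
      Sym2.eq_iff]
    simp only [Fin.ext_iff]
    omega

theorem isHamiltonian_walkUpTo : (walkUpTo n n le_rfl).IsHamiltonian := by
  intro v
  rw [← List.count_map_of_injective _ _ Fin.val_injective, map_val_support_walkUpTo,
    List.count_eq_one_of_mem List.nodup_range (List.mem_range.2 v.isLt)]

theorem edgeSet_walkUpTo : (walkUpTo n n le_rfl).edgeSet = (pathGraph (n + 1)).edgeSet := by
  ext e
  rw [Walk.mem_edgeSet, mem_edges_walkUpTo, and_iff_left_iff_imp]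
  exact fun _ v _ => Nat.le_of_lt_succ v.isLt

end pathGraph

end SimpleGraph

open SimpleGraph

theorem boundaryB_self_eq_edgeSet (q : ℕ) : boundaryB q q = (pathGraph (2 ^ q + 1)).edgeSet := by
  ext e
  induction e using Sym2.ind with | h u v => ?_
  simp only [boundaryB, Nat.sub_self, pow_zero, one_dvd, true_and, Set.mem_ofPred_eq, mem_edgeSet,
    pathGraph_adj]
  constructor
  · rintro ⟨a, b, hab, hb⟩
    rcases Sym2.eq_iff.1 hab with ⟨rfl, rfl⟩ | ⟨rfl, rfl⟩ <;> omega
  · rintro (h | h)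
    exacts [⟨u, v, rfl, h.symm⟩, ⟨v, u, Sym2.eq_swap, h.symm⟩]

theorem pathGraph_le_tFractal (q : ℕ) : pathGraph (2 ^ q + 1) ≤ TFractal q := by
  have step (a b : ℕ) (h : a + 1 = b) : fracAdjAux q a b := ⟨q, le_rfl, by simp, by simp [h]⟩
  intro u v huv
  rcases pathGraph_adj.1 huv with h | h
  exacts [Or.inl (step _ _ h), Or.inr (step _ _ h)]

/-- the boundary `B_q` of `△_q` has exactly `2^q` edges, every vertex of
`△_q` is incident with some edge of `B_q`, and `B_q` forms a `σ`-`τ` path visiting all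
vertices of `△_q`. -/
theorem tfractal_outer_boundary (q : ℕ) :
    (boundaryB q q).ncard = 2 ^ q ∧
      (∀ v : Fin (2 ^ q + 1), ∃ e ∈ boundaryB q q, v ∈ e) ∧
      (∃ p : (TFractal q).Walk (sigV q) (tauV q),
        p.IsPath ∧ {e | e ∈ p.edges} = boundaryB q q ∧
          ∀ v : Fin (2 ^ q + 1), v ∈ p.support) := by
  obtain ⟨p, hp, hpB⟩ : ∃ p : (TFractal q).Walk (sigV q) (tauV q),
      p.IsHamiltonian ∧ p.edgeSet = boundaryB q q :=
    ⟨_, pathGraph.isHamiltonian_walkUpTo.map (.ofLE (pathGraph_le_tFractal q))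
        Function.bijective_id,
      (Walk.edgeSet_mapLe_eq_edgeSet _ _).trans <|
        pathGraph.edgeSet_walkUpTo.trans (boundaryB_self_eq_edgeSet q).symm⟩
  have hlen : p.length = 2 ^ q := by simpa using hp.length_eq
  refine ⟨?_, fun v => ?_, p, hp.isPath, hpB, hp.mem_support⟩
  · rw [← hpB, hp.isPath.isTrail.ncard_edgeSet, hlen]
  · have hnil : ¬p.Nil := by simp [← Walk.length_eq_zero_iff, hlen]
    obtain ⟨e, he, hve⟩ :=
      (Walk.mem_support_iff_exists_mem_edges_of_not_nil hnil).1 (hp.mem_support v)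
    exact ⟨e, hpB ▸ he, hve⟩
end

section
/- Every minimum σ-τ edge cut in the q-T-fractal △_q has size exactly q+1. -/
/-!
For each `i ≤ q` the boundary `B_i` is a `σ`-`τ` path (through the multiples of `2^(q-i)`),
and these `q + 1` paths are edge-disjoint, so every cut has at least `q + 1` edges. Conversely,
the `q + 1` edges `{σ, 2^j}` at `σ` form a cut.
-/

theorem Finset.card_le_ncard_of_pairwiseDisjoint {ι α : Type*} {s : Finset ι} {B : ι → Set α}
    {C : Set α} (hC : C.Finite) (hB : (s : Set ι).PairwiseDisjoint B)
    (hmeet : ∀ i ∈ s, (C ∩ B i).Nonempty) : s.card ≤ C.ncard := by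
  obtain rfl | ⟨i₀, hi₀⟩ := s.eq_empty_or_nonempty
  · simp
  have : Nonempty α := ⟨(hmeet i₀ hi₀).some⟩
  choose! f hf using hmeet
  rw [← Set.ncard_coe_finset]
  refine Set.ncard_le_ncard_of_injOn f (fun i hi => (hf i hi).1) (fun i hi j hj hij => ?_) hC
  by_contra hne
  exact Set.disjoint_left.1 (hB hi hj hne) (hf i hi).2 (hij ▸ (hf j hj).2)

namespace SimpleGraph

variable {V : Type*} {G H : SimpleGraph V} {u v : V}

theorem Reachable.deleteEdges_of_le {C : Set (Sym2 V)} (hHG : H ≤ G) (hH : H.Reachable u v)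
    (hC : Disjoint C H.edgeSet) : (G.deleteEdges C).Reachable u v :=
  hH.mono fun _ _ hab => (deleteEdges_adj ..).2 ⟨hHG hab, fun h => Set.disjoint_left.1 hC h hab⟩

theorem not_reachable_deleteEdges_incidenceSet (huv : u ≠ v) :
    ¬ (G.deleteEdges (G.incidenceSet u)).Reachable u v := by
  rintro ⟨p⟩
  have hadj := p.adj_snd (p.not_nil_of_ne huv)
  rw [deleteEdges_adj] at hadj
  exact hadj.2 ⟨hadj.1, Sym2.mem_mk_left _ _⟩

theorem ncard_incidenceSet (v : V) : (G.incidenceSet v).ncard = (G.neighborSet v).ncard := by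
  classical
  exact Set.ncard_congr' (G.incidenceSetEquivNeighborSet v)

end SimpleGraph

open SimpleGraph

theorem sigV_ne_tauV (q : ℕ) : sigV q ≠ tauV q := by
  simp [sigV, tauV, Fin.ext_iff, (Nat.two_pow_pos q).ne]

theorem boundaryB_pairwiseDisjoint (q : ℕ) : (Set.Iic q).PairwiseDisjoint (boundaryB q) := by
  rintro i hi j hj hij
  refine Set.disjoint_left.2 ?_
  rintro e ⟨a, b, rfl, -, hb⟩ ⟨a', b', he, -, hb'⟩
  have := Nat.two_pow_pos (q - i)
  have := Nat.two_pow_pos (q - j)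
  rcases Sym2.eq_iff.1 he with ⟨rfl, rfl⟩ | ⟨rfl, rfl⟩
  · have := Nat.pow_right_injective le_rfl (Nat.add_left_cancel (hb.symm.trans hb'))
    simp only [Set.mem_Iic] at hi hj
    omega
  · omega

theorem fromEdgeSet_boundaryB_le (q : ℕ) {i : ℕ} (hi : i ≤ q) :
    fromEdgeSet (boundaryB q i) ≤ TFractal q := by
  rintro x y ⟨⟨a, b, he, ha, hb⟩, -⟩
  rcases Sym2.eq_iff.1 he with ⟨rfl, rfl⟩ | ⟨rfl, rfl⟩
  · exact Or.inl ⟨i, hi, ha, hb⟩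
  · exact Or.inr ⟨i, hi, ha, hb⟩

theorem reachable_fromEdgeSet_boundaryB (q : ℕ) {i : ℕ} (hi : i ≤ q) :
    (fromEdgeSet (boundaryB q i)).Reachable (sigV q) (tauV q) := by
  have hmul : 2 ^ i * 2 ^ (q - i) = 2 ^ q := by rw [← pow_add, Nat.add_sub_cancel' hi]
  have hlt : ∀ k ≤ 2 ^ i, k * 2 ^ (q - i) < 2 ^ q + 1 := fun k hk =>
    Nat.lt_succ_of_le (hmul ▸ Nat.mul_le_mul_right _ hk)
  have hpath : ∀ k (hk : k ≤ 2 ^ i),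
      (fromEdgeSet (boundaryB q i)).Reachable (sigV q) ⟨k * 2 ^ (q - i), hlt k hk⟩ := by
    intro k
    induction k with
    | zero => intro; rw [show sigV q = ⟨0 * 2 ^ (q - i), hlt 0 (Nat.zero_le _)⟩ by simp [sigV]]
    | succ k ih =>
      intro hk
      refine (ih (by omega)).trans (Adj.reachable ⟨⟨_, _, rfl, dvd_mul_left _ _, by ring⟩, ?_⟩)
      have := Nat.two_pow_pos (q - i)
      simp [Fin.ext_iff]
  simpa [tauV, hmul] using hpath _ le_rfl

theorem IsSTCut.inter_boundaryB_nonempty {q : ℕ} {C : Set (Sym2 (Fin (2 ^ q + 1)))}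
    (hC : IsSTCut q C) {i : ℕ} (hi : i ≤ q) : (C ∩ boundaryB q i).Nonempty := by
  by_contra hempty
  refine hC (Reachable.deleteEdges_of_le (fromEdgeSet_boundaryB_le q hi)
    (reachable_fromEdgeSet_boundaryB q hi) ?_)
  rw [edgeSet_fromEdgeSet]
  exact Set.disjoint_left.2 fun e heC heB => hempty ⟨e, heC, heB.1⟩

theorem IsSTCut.succ_le_ncard {q : ℕ} {C : Set (Sym2 (Fin (2 ^ q + 1)))} (hC : IsSTCut q C) :
    q + 1 ≤ C.ncard := by
  simpa using Finset.card_le_ncard_of_pairwiseDisjoint (s := Finset.Iic q) C.toFinite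
    (by simpa using boundaryB_pairwiseDisjoint q)
    (fun i hi => hC.inter_boundaryB_nonempty (Finset.mem_Iic.1 hi))

theorem image_val_neighborSet_sigV (q : ℕ) :
    Fin.val '' (TFractal q).neighborSet (sigV q) = (2 ^ ·) '' Set.Iic q := by
  ext n
  simp only [Set.mem_image, mem_neighborSet, TFractal, fracAdjAux, sigV, Set.mem_Iic]
  constructor
  · rintro ⟨v, ⟨i, hi, -, hv⟩ | ⟨i, -, -, hv⟩, rfl⟩
    · exact ⟨q - i, Nat.sub_le _ _, by simp [hv]⟩
    · have := Nat.two_pow_pos (q - i); omega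
  · rintro ⟨j, hj, rfl⟩
    refine ⟨⟨2 ^ j, Nat.lt_succ_of_le (Nat.pow_le_pow_right two_pos hj)⟩,
      Or.inl ⟨q - j, Nat.sub_le _ _, dvd_zero _, ?_⟩, rfl⟩
    simp [Nat.sub_sub_self hj]

theorem ncard_incidenceSet_sigV (q : ℕ) : ((TFractal q).incidenceSet (sigV q)).ncard = q + 1 := by
  rw [ncard_incidenceSet, ← Set.ncard_image_of_injective _ Fin.val_injective,
    image_val_neighborSet_sigV, (Nat.pow_right_injective le_rfl).injOn.ncard_image]
  simp

/-- every minimum `σ`-`τ` edge cut in the `q`-T-fractal has size exactly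
`q + 1`. -/
theorem tfractal_min_cut_size (q : ℕ) (C : Set (Sym2 (Fin (2 ^ q + 1))))
    (hC : MinSTCut q C) :
    C.ncard = q + 1 := by
  obtain ⟨-, hcut, hmin⟩ := hC
  refine le_antisymm ?_ hcut.succ_le_ncard
  calc C.ncard ≤ ((TFractal q).incidenceSet (sigV q)).ncard :=
        hmin _ ((TFractal q).incidenceSet_subset _)
          (not_reachable_deleteEdges_incidenceSet (sigV_ne_tauV q))
    _ = q + 1 := ncard_incidenceSet_sigV q
end

section
/- In the q-T-fractal △_q there exist q+1 pairwise edge-disjoint σ-τ paths; consequently, by Menger's theorem, every σ-τ edge cut has size at least q+1. -/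
/-!
The boundary `B_i` is the path `0, 2^(q-i), 2·2^(q-i), …, 2^q` along the outer vertex set, and every
edge of it joins two vertices at distance exactly `2^(q-i)`; hence distinct boundaries share no
edge. A `σ`-`τ` edge cut must contain an edge of each of these `q + 1` paths, and these edges are
distinct.
-/

namespace SimpleGraph

variable {V : Type*} {G : SimpleGraph V}

namespace Walk

def ofChain (f : ℕ → V) (n : ℕ) (h : ∀ k < n, G.Adj (f k) (f (k + 1))) : G.Walk (f 0) (f n) :=
  (ofSupport ((List.range (n + 1)).map f) (by simp)
    ((List.isChain_map f).2 ((List.isChain_range_succ _ n).2 h))).copy (by simp) (by simp)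

variable {f : ℕ → V} {n : ℕ} {h : ∀ k < n, G.Adj (f k) (f (k + 1))}

theorem support_ofChain : (ofChain f n h).support = (List.range (n + 1)).map f := by
  simp [ofChain]

theorem isPath_ofChain (hf : Set.InjOn f (Set.Iic n)) : (ofChain f n h).IsPath := by
  rw [isPath_def, support_ofChain]
  exact List.Nodup.map_on (fun a ha b hb => hf (by simpa [Nat.lt_succ_iff] using ha)
    (by simpa [Nat.lt_succ_iff] using hb)) List.nodup_range

theorem exists_of_mem_edges_ofChain {e : Sym2 V} (he : e ∈ (ofChain f n h).edges) :
    ∃ k < n, e = s(f k, f (k + 1)) := by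
  rw [edges_eq_zipWith_support, support_ofChain, List.mem_iff_getElem] at he
  obtain ⟨k, hk, rfl⟩ := he
  exact ⟨k, by simpa using hk, by simp⟩

end Walk

theorem card_le_ncard_of_edgeDisjoint_walks {ι : Type*} [Finite ι] {u v : V} (P : ι → G.Walk u v)
    (hP : Pairwise fun i j => ∀ e ∈ (P i).edges, e ∉ (P j).edges) {C : Set (Sym2 V)}
    (hC : C.Finite) (hcut : ¬ (G.deleteEdges C).Reachable u v) : Nat.card ι ≤ C.ncard := by
  have hmeet : ∀ i, ∃ e ∈ (P i).edges, e ∈ C := fun i => by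
    by_contra! h
    exact hcut ⟨(P i).toDeleteEdges C h⟩
  choose e he heC using hmeet
  rw [← Set.ncard_univ]
  refine Set.ncard_le_ncard_of_injOn e (fun i _ => heC i) (fun i _ j _ hij => ?_) hC
  by_contra hne
  exact hP hne _ (he i) (hij ▸ he j)

end SimpleGraph

-- Clamped to keep the function total on `ℕ`; the value is exact for `k ≤ 2 ^ i`.
def boundaryVertex (q i k : ℕ) : Fin (2 ^ q + 1) := Fin.clamp (k * 2 ^ (q - i)) (2 ^ q)

theorem boundaryVertex_val {q i k : ℕ} (hi : i ≤ q) (hk : k ≤ 2 ^ i) :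
    (boundaryVertex q i k).val = k * 2 ^ (q - i) := by
  have : k * 2 ^ (q - i) ≤ 2 ^ q := by
    calc k * 2 ^ (q - i) ≤ 2 ^ i * 2 ^ (q - i) := Nat.mul_le_mul_right _ hk
      _ = 2 ^ q := by rw [← pow_add, Nat.add_sub_cancel' hi]
  simp [boundaryVertex, this]

theorem boundaryVertex_succ_mem_boundaryB {q i k : ℕ} (hi : i ≤ q) (hk : k < 2 ^ i) :
    s(boundaryVertex q i k, boundaryVertex q i (k + 1)) ∈ boundaryB q i :=
  ⟨_, _, rfl, by simp [boundaryVertex_val hi hk.le],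
    by simp [boundaryVertex_val hi hk.le, boundaryVertex_val hi hk, add_mul]⟩

theorem tfractal_adj_of_mem_boundaryB {q i : ℕ} (hi : i ≤ q) {a b : Fin (2 ^ q + 1)}
    (h : s(a, b) ∈ boundaryB q i) : (TFractal q).Adj a b := by
  obtain ⟨a', b', he, hdvd, hb⟩ := h
  rcases Sym2.eq_iff.1 he with ⟨rfl, rfl⟩ | ⟨rfl, rfl⟩
  · exact Or.inl ⟨i, hi, hdvd, hb⟩
  · exact Or.inr ⟨i, hi, hdvd, hb⟩

theorem boundaryB_disjoint {q i j : ℕ} (hi : i ≤ q) (hj : j ≤ q) (hij : i ≠ j) :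
    Disjoint (boundaryB q i) (boundaryB q j) := by
  refine Set.disjoint_left.2 fun e ⟨a, b, he, _, hb⟩ ⟨a', b', he', _, hb'⟩ => hij ?_
  have := Nat.two_pow_pos (q - i)
  have := Nat.two_pow_pos (q - j)
  have hpow : 2 ^ (q - i) = 2 ^ (q - j) := by
    rcases Sym2.eq_iff.1 (he.symm.trans he') with ⟨rfl, rfl⟩ | ⟨rfl, rfl⟩ <;> omega
  have := Nat.pow_right_injective le_rfl hpow
  omega

def boundaryWalk (q i : ℕ) (hi : i ≤ q) : (TFractal q).Walk (sigV q) (tauV q) :=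
  (SimpleGraph.Walk.ofChain (boundaryVertex q i) (2 ^ i) fun _ hk =>
    tfractal_adj_of_mem_boundaryB hi (boundaryVertex_succ_mem_boundaryB hi hk)).copy
    (Fin.ext (by simp [boundaryVertex_val hi, sigV]))
    (Fin.ext (by simp [boundaryVertex_val hi, tauV, ← pow_add, Nat.add_sub_cancel' hi]))

theorem boundaryWalk_isPath {q i : ℕ} (hi : i ≤ q) : (boundaryWalk q i hi).IsPath := by
  rw [boundaryWalk, SimpleGraph.Walk.isPath_copy]
  refine SimpleGraph.Walk.isPath_ofChain fun k hk l hl hkl => ?_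
  have := congrArg Fin.val hkl
  rw [boundaryVertex_val hi hk, boundaryVertex_val hi hl] at this
  exact Nat.eq_of_mul_eq_mul_right (Nat.two_pow_pos _) this

theorem mem_boundaryB_of_mem_edges_boundaryWalk {q i : ℕ} (hi : i ≤ q)
    {e : Sym2 (Fin (2 ^ q + 1))} (he : e ∈ (boundaryWalk q i hi).edges) : e ∈ boundaryB q i := by
  rw [boundaryWalk, SimpleGraph.Walk.edges_copy] at he
  obtain ⟨k, hk, rfl⟩ := SimpleGraph.Walk.exists_of_mem_edges_ofChain he
  exact boundaryVertex_succ_mem_boundaryB hi hk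

/-- in the `q`-T-fractal there exist `q+1` pairwise edge-disjoint
`σ`-`τ` paths; consequently (Menger), every `σ`-`τ` edge cut has size at least `q+1`. -/
theorem tfractal_disjoint_paths_and_cut_lower_bound (q : ℕ) :
    (∃ P : Fin (q + 1) → (TFractal q).Walk (sigV q) (tauV q),
        (∀ i, (P i).IsPath) ∧
          ∀ i j, i ≠ j → ∀ e, e ∈ (P i).edges → e ∉ (P j).edges) ∧
      (∀ C ⊆ (TFractal q).edgeSet, IsSTCut q C → q + 1 ≤ C.ncard) := by
  have hi (i : Fin (q + 1)) : (i : ℕ) ≤ q := Nat.lt_succ_iff.1 i.isLt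
  let P (i : Fin (q + 1)) := boundaryWalk q i (hi i)
  have hdisj : ∀ i j, i ≠ j → ∀ e, e ∈ (P i).edges → e ∉ (P j).edges :=
    fun i j hij _ hei hej => Set.disjoint_left.1
      (boundaryB_disjoint (hi i) (hi j) (Fin.val_injective.ne hij))
      (mem_boundaryB_of_mem_edges_boundaryWalk (hi i) hei)
      (mem_boundaryB_of_mem_edges_boundaryWalk (hi j) hej)
  refine ⟨⟨P, fun i => boundaryWalk_isPath (hi i), hdisj⟩, fun C _ hC => ?_⟩
  simpa using SimpleGraph.card_le_ncard_of_edgeDisjoint_walks P hdisj C.toFinite hC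
end

section
/- There is a one-to-one correspondence between the root-leaf paths in the dual structure T_q of the q-T-fractal △_q and the minimum σ-τ edge cuts of △_q. -/
/-- The dual structure `T_q` of the `q`-T-fractal, realized with heap numbering on
`Fin (2^(q+1))`: vertex `0` is the root (the split vertex next to the triangle
containing `{σ,τ}`), vertex `1` is the vertex dual to that triangle, every vertex
`v ≥ 1` is adjacent to its parent `v / 2`, the vertices `v` with `2^i ≤ v < 2^(i+1)`
(`i < q`) are dual to the triangles of depth `i + 1`, and the vertices
`v ≥ 2^q` are the leaves (the remaining split vertices of the outer face). -/
def dualTree (q : ℕ) : SimpleGraph (Fin (2 ^ (q + 1))) where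
  Adj a b := (a.val ≠ 0 ∧ b.val = a.val / 2) ∨ (b.val ≠ 0 ∧ a.val = b.val / 2)
  symm := ⟨fun _ _ h => h.symm⟩
  loopless := by
    constructor
    intro a h
    rcases h with ⟨h0, h⟩ | ⟨h0, h⟩ <;> omega

/-- The root of the dual structure `T_q`. -/
def dualRoot (q : ℕ) : Fin (2 ^ (q + 1)) := ⟨0, Nat.two_pow_pos _⟩

/-- A vertex of `T_q` is a leaf iff its heap number is at least `2^q`. -/
def IsDualLeaf (q : ℕ) (v : Fin (2 ^ (q + 1))) : Prop := 2 ^ q ≤ v.val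

/-- The edge of `△_q` dual to the `T_q`-edge between `v ≥ 1` and its parent `v / 2`
(described on the underlying natural-number vertex labels): for `v` at depth
`i = log₂ v` with offset `j = v - 2^i`, this is the `j`-th edge of the boundary `B_i`,
namely `{j·2^(q-i), (j+1)·2^(q-i)}`. -/
def primalOfNode (q v : ℕ) : Sym2 ℕ :=
  s((v - 2 ^ Nat.log 2 v) * 2 ^ (q - Nat.log 2 v),
    (v - 2 ^ Nat.log 2 v + 1) * 2 ^ (q - Nat.log 2 v))

/-- The edge of `△_q` (as a pair of natural-number labels) dual to an edge of `T_q`: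
an edge of the tree is `{v, v / 2}`, i.e. it is determined by its lower endpoint `v`,
which is the one with the larger heap number. -/
def primalOfDualEdge (q : ℕ) : Sym2 (Fin (2 ^ (q + 1))) → Sym2 ℕ :=
  Sym2.lift ⟨fun a b => primalOfNode q (max a.val b.val), fun a b => by
    simp [max_comm]⟩

/-! Label the vertices of `△_q` by `0, …, 2^q`. Its edges are the pairs `{a, a + 2^k}` with
`2^k ∣ a` (the edges of scale `2^k`), and the edges of any one scale form a `σ`-`τ` path, so a
cut contains an edge of each of the `q + 1` scales and a minimum cut exactly one. If the unit edge
of a minimum cut is `{m, m + 1}`, its edge of every other scale must cross `m` as well, since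
otherwise unit steps could bypass it; so the minimum cuts are the sets `C_m` of edges crossing `m`,
`0 ≤ m < 2^q`. Dually, the only path from the root of `T_q` to the leaf `2^q + m` runs through
the ancestors `(2^q + m) / 2^j`, and the tree edge above the `j`-th of them is dual to the edge of
`C_m` of scale `2^j`. -/

open SimpleGraph

lemma Nat.add_le_of_dvd_of_lt {a d n : ℕ} (ha : d ∣ a) (hn : d ∣ n) (h : a < n) : a + d ≤ n := by
  have := Nat.le_of_dvd (Nat.sub_pos_of_lt h) (Nat.dvd_sub hn ha)
  omega

lemma Sym2.add_two_pow_inj {a b k l : ℕ} (h : s(a, a + 2 ^ k) = s(b, b + 2 ^ l)) :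
    a = b ∧ k = l := by
  have := Nat.two_pow_pos k
  have := Nat.two_pow_pos l
  rcases Sym2.eq_iff.mp h with ⟨rfl, h⟩ | ⟨h₁, h₂⟩
  · exact ⟨rfl, Nat.pow_right_injective le_rfl (show 2 ^ k = 2 ^ l by omega)⟩
  · omega

lemma Nat.div_mul_eq_of_dvd {a d m : ℕ} (hd : d ∣ a) (h₁ : a ≤ m) (h₂ : m < a + d) :
    m / d * d = a := by
  obtain ⟨t, rfl⟩ := hd
  rw [Nat.div_eq_of_lt_le (k := t) (by linarith) (by linarith), mul_comm]

lemma SimpleGraph.Reachable.of_adj_imp {V : Type*} {G : SimpleGraph V} {P : V → Prop}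
    (hP : ∀ u v, G.Adj u v → P u → P v) {u v : V} (h : G.Reachable u v) (hu : P u) : P v := by
  rw [reachable_iff_reflTransGen] at h
  induction h with
  | refl => exact hu
  | tail _ hadj ih => exact hP _ _ hadj ih

lemma SimpleGraph.reachable_of_adj_succ {V : Type*} {G : SimpleGraph V} (f : ℕ → V) {i j : ℕ}
    (hij : i ≤ j) (h : ∀ t ∈ Set.Ico i j, G.Adj (f t) (f (t + 1))) : G.Reachable (f i) (f j) :=
  (G.reachable_iff_reflTransGen _ _).mpr
    ((reflTransGen_of_succ_of_le (fun a b => G.Adj (f a) (f b)) h hij).lift f fun _ _ => id)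

namespace TFractal

open Fin.NatCast

variable {q : ℕ}

lemma adj_iff {a b : Fin (2 ^ q + 1)} :
    (TFractal q).Adj a b ↔ ∃ k ≤ q,
      (2 ^ k ∣ a.val ∧ b.val = a.val + 2 ^ k) ∨ (2 ^ k ∣ b.val ∧ a.val = b.val + 2 ^ k) := by
  have key : ∀ x y : ℕ, fracAdjAux q x y ↔ ∃ k ≤ q, 2 ^ k ∣ x ∧ y = x + 2 ^ k := fun x y =>
    ⟨fun ⟨i, _, h⟩ => ⟨q - i, Nat.sub_le _ _, h⟩,
      fun ⟨k, hk, h⟩ => ⟨q - k, Nat.sub_le _ _, by rwa [Nat.sub_sub_self hk]⟩⟩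
  simp only [TFractal, key]
  constructor
  · rintro (⟨k, hk, h⟩ | ⟨k, hk, h⟩)
    exacts [⟨k, hk, .inl h⟩, ⟨k, hk, .inr h⟩]
  · rintro ⟨k, hk, h | h⟩
    exacts [.inl ⟨k, hk, h⟩, .inr ⟨k, hk, h⟩]

lemma mem_edgeSet_of_map_val {e : Sym2 (Fin (2 ^ q + 1))} {a k : ℕ} (hk : k ≤ q)
    (hd : 2 ^ k ∣ a) (he : Sym2.map Fin.val e = s(a, a + 2 ^ k)) : e ∈ (TFractal q).edgeSet := by
  induction e using Sym2.ind with
  | _ x y =>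
    rw [mem_edgeSet, adj_iff]
    rcases Sym2.eq_iff.mp ((Sym2.map_mk _ _ _).symm.trans he) with ⟨hx, hy⟩ | ⟨hx, hy⟩
    · exact ⟨k, hk, .inl ⟨hx ▸ hd, hx ▸ hy⟩⟩
    · exact ⟨k, hk, .inr ⟨hy ▸ hd, hy ▸ hx⟩⟩

lemma val_natCast {n : ℕ} (hn : n ≤ 2 ^ q) : ((n : Fin (2 ^ q + 1)) : ℕ) = n :=
  Fin.val_cast_of_lt (Nat.lt_succ_of_le hn)

lemma sigV_eq : sigV q = ((0 : ℕ) : Fin (2 ^ q + 1)) := Fin.ext (val_natCast (Nat.zero_le _)).symm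

lemma tauV_eq : tauV q = ((2 ^ q : ℕ) : Fin (2 ^ q + 1)) := Fin.ext (val_natCast le_rfl).symm

lemma adj_deleteEdges_natCast {C : Set (Sym2 (Fin (2 ^ q + 1)))} {a k : ℕ} (hk : k ≤ q)
    (hd : 2 ^ k ∣ a) (hb : a + 2 ^ k ≤ 2 ^ q) (hC : s(a, a + 2 ^ k) ∉ Sym2.map Fin.val '' C) :
    ((TFractal q).deleteEdges C).Adj (a : Fin (2 ^ q + 1)) ((a + 2 ^ k : ℕ) : Fin (2 ^ q + 1)) := by
  have ha := val_natCast (q := q) (n := a) (by omega)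
  have hb := val_natCast (q := q) hb
  refine deleteEdges_adj.mpr ⟨adj_iff.mpr ⟨k, hk, .inl ⟨by rwa [ha], by rw [ha, hb]⟩⟩, ?_⟩
  exact fun he => hC ⟨_, he, by rw [Sym2.map_mk, ha, hb]⟩

lemma reachable_of_scale_steps {C : Set (Sym2 (Fin (2 ^ q + 1)))} {k i j : ℕ} (hk : k ≤ q)
    (hij : i ≤ j) (hj : j * 2 ^ k ≤ 2 ^ q)
    (hC : ∀ t ∈ Set.Ico i j, s(t * 2 ^ k, t * 2 ^ k + 2 ^ k) ∉ Sym2.map Fin.val '' C) :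
    ((TFractal q).deleteEdges C).Reachable ((i * 2 ^ k : ℕ) : Fin (2 ^ q + 1))
      ((j * 2 ^ k : ℕ) : Fin (2 ^ q + 1)) :=
  reachable_of_adj_succ (fun t => ((t * 2 ^ k : ℕ) : Fin (2 ^ q + 1))) hij fun t ht => by
    have h := adj_deleteEdges_natCast hk (Dvd.intro_left t rfl)
      (by rw [← add_one_mul]; exact (Nat.mul_le_mul_right _ ht.2).trans hj) (hC t ht)
    simpa only [add_one_mul] using h

lemma reachable_of_unit_steps {C : Set (Sym2 (Fin (2 ^ q + 1)))} {i j : ℕ} (hij : i ≤ j)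
    (hj : j ≤ 2 ^ q) (hC : ∀ x ∈ Set.Ico i j, s(x, x + 1) ∉ Sym2.map Fin.val '' C) :
    ((TFractal q).deleteEdges C).Reachable (i : Fin (2 ^ q + 1)) (j : Fin (2 ^ q + 1)) := by
  simpa using reachable_of_scale_steps (C := C) (k := 0) (Nat.zero_le q) hij (by simpa using hj)
    (by simpa using hC)

end TFractal

open TFractal

variable {q : ℕ}

/-- `natCutEdge m k` is the edge of scale `2^k` that crosses the gap between `m` and `m + 1`. -/
def natCutEdge (m k : ℕ) : Sym2 ℕ := s(m / 2 ^ k * 2 ^ k, m / 2 ^ k * 2 ^ k + 2 ^ k)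

def crossingCut (q m : ℕ) : Set (Sym2 (Fin (2 ^ q + 1))) :=
  Sym2.map Fin.val ⁻¹' (natCutEdge m '' Set.Iic q)

lemma natCutEdge_injective (m : ℕ) : Function.Injective (natCutEdge m) :=
  fun _ _ h => (Sym2.add_two_pow_inj h).2

lemma div_mul_add_two_pow_le {m k : ℕ} (hm : m < 2 ^ q) (hk : k ≤ q) :
    m / 2 ^ k * 2 ^ k + 2 ^ k ≤ 2 ^ q :=
  Nat.add_le_of_dvd_of_lt (Dvd.intro_left _ rfl) (pow_dvd_pow 2 hk)
    ((Nat.div_mul_le_self _ _).trans_lt hm)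

lemma image_val_crossingCut {m : ℕ} (hm : m < 2 ^ q) :
    Sym2.map Fin.val '' crossingCut q m = natCutEdge m '' Set.Iic q := by
  refine Set.image_preimage_eq_of_subset ?_
  rintro _ ⟨k, hk, rfl⟩
  have := div_mul_add_two_pow_le hm hk
  have := Nat.two_pow_pos k
  exact ⟨s(⟨m / 2 ^ k * 2 ^ k, by omega⟩, ⟨m / 2 ^ k * 2 ^ k + 2 ^ k, by omega⟩), rfl⟩

lemma ncard_crossingCut {m : ℕ} (hm : m < 2 ^ q) : (crossingCut q m).ncard = q + 1 := by
  rw [← Set.ncard_image_of_injective _ (Sym2.map.injective Fin.val_injective),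
    image_val_crossingCut hm, Set.ncard_image_of_injective _ (natCutEdge_injective m),
    ← Finset.coe_Iic, Set.ncard_coe_finset, Nat.card_Iic]

lemma crossingCut_injOn : Set.InjOn (crossingCut q) (Set.Iio (2 ^ q)) := by
  intro m hm m' hm' h
  have : natCutEdge m 0 ∈ natCutEdge m' '' Set.Iic q := by
    rw [← image_val_crossingCut hm', ← h, image_val_crossingCut hm]
    exact ⟨0, Nat.zero_le _, rfl⟩
  obtain ⟨k, -, hk⟩ := this
  obtain ⟨h, rfl⟩ := Sym2.add_two_pow_inj hk
  simpa [natCutEdge] using h.symm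

lemma crossingCut_subset_edgeSet (m : ℕ) : crossingCut q m ⊆ (TFractal q).edgeSet :=
  fun _ ⟨_, hk, he⟩ => mem_edgeSet_of_map_val hk (Dvd.intro_left _ rfl) he.symm

lemma isSTCut_crossingCut {m : ℕ} (hm : m < 2 ^ q) : IsSTCut q (crossingCut q m) := by
  have hstep : ∀ u v, ((TFractal q).deleteEdges (crossingCut q m)).Adj u v →
      u.val ≤ m → v.val ≤ m := by
    intro u v huv hu
    obtain ⟨hadj, hcut⟩ := deleteEdges_adj.mp huv
    obtain ⟨k, hk, ⟨hd, hv⟩ | ⟨_, hu'⟩⟩ := adj_iff.mp hadj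
    · by_contra hmv
      have hcross := Nat.div_mul_eq_of_dvd hd hu (by omega)
      exact hcut ⟨k, hk, by rw [Sym2.map_mk, hv, natCutEdge, hcross]⟩
    · omega
  intro h
  have := h.of_adj_imp hstep (Nat.zero_le m)
  simp only [tauV] at this
  omega

namespace IsSTCut

variable {C : Set (Sym2 (Fin (2 ^ q + 1)))}

/-- The edges of scale `2^k` alone already form a `σ`-`τ` path. -/
lemma exists_scale_mem (hC : IsSTCut q C) {k : ℕ} (hk : k ≤ q) :
    ∃ a, s(a, a + 2 ^ k) ∈ Sym2.map Fin.val '' C := by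
  by_contra! h
  have hq : 2 ^ (q - k) * 2 ^ k = 2 ^ q := by rw [← pow_add, Nat.sub_add_cancel hk]
  have := reachable_of_scale_steps (C := C) hk (Nat.zero_le _) hq.le fun t _ => h _
  rw [zero_mul, hq, ← sigV_eq, ← tauV_eq] at this
  exact hC this

lemma exists_scale_edges (hC : IsSTCut q C) :
    ∃ e : Fin (q + 1) → Sym2 (Fin (2 ^ q + 1)), Function.Injective e ∧
      ∀ k, e k ∈ C ∧ ∃ a, Sym2.map Fin.val (e k) = s(a, a + 2 ^ k.val) := by
  choose a e he hmap using fun k : Fin (q + 1) => hC.exists_scale_mem (Nat.lt_succ_iff.mp k.isLt)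
  refine ⟨e, fun k l hkl => Fin.ext ?_, fun k => ⟨he k, a k, hmap k⟩⟩
  exact (Sym2.add_two_pow_inj ((hmap k).symm.trans (hkl ▸ hmap l))).2

lemma succ_le_ncard_s8 (hC : IsSTCut q C) : q + 1 ≤ C.ncard := by
  obtain ⟨e, he, hmem⟩ := hC.exists_scale_edges
  calc q + 1 = (Set.range e).ncard := by simp [Set.ncard_range_of_injective he]
    _ ≤ C.ncard := Set.ncard_le_ncard (Set.range_subset_iff.mpr fun k => (hmem k).1)

/-- Otherwise `σ` reaches `τ` by unit steps up to the left end of the missing edge, a jump across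
`m`, and unit steps again. -/
lemma natCutEdge_mem (hC : IsSTCut q C) {m k : ℕ} (hm : m < 2 ^ q) (hk : k ≤ q)
    (hunit : ∀ x, s(x, x + 1) ∈ Sym2.map Fin.val '' C → x = m) :
    natCutEdge m k ∈ Sym2.map Fin.val '' C := by
  by_contra h
  have hle := Nat.div_mul_le_self m (2 ^ k)
  have hlt := Nat.lt_div_mul_add (a := m) (Nat.two_pow_pos k)
  have hend := div_mul_add_two_pow_le hm hk
  have left := reachable_of_unit_steps (C := C) (Nat.zero_le _) (hle.trans hm.le)
    fun x hx hmem => by have := hunit x hmem; simp only [Set.mem_Ico] at hx; omega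
  have jump := reachable_of_scale_steps (C := C) hk (Nat.le_add_right (m / 2 ^ k) 1)
    (by rwa [add_one_mul]) fun t ht => by
      obtain rfl : t = m / 2 ^ k := by simp only [Set.mem_Ico] at ht; omega
      exact h
  have right := reachable_of_unit_steps (C := C) hend le_rfl
    fun x hx hmem => by have := hunit x hmem; simp only [Set.mem_Ico] at hx; omega
  rw [add_one_mul] at jump
  exact hC (sigV_eq ▸ tauV_eq ▸ left.trans (jump.trans right))

lemma eq_crossingCut (hC : IsSTCut q C) (hcard : C.ncard ≤ q + 1) :
    ∃ m < 2 ^ q, C = crossingCut q m := by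
  obtain ⟨e, he, hmem⟩ := hC.exists_scale_edges
  have hCe : C = Set.range e := by
    refine (Set.eq_of_subset_of_ncard_le (Set.range_subset_iff.mpr fun k => (hmem k).1) ?_
      (Set.toFinite _)).symm
    simpa [Set.ncard_range_of_injective he] using hcard
  obtain ⟨m, hm0⟩ := (hmem 0).2
  have hm : m < 2 ^ q := by
    obtain ⟨y, -, hy⟩ := Sym2.mem_map.mp (hm0 ▸ Sym2.mem_mk_right m (m + 2 ^ 0))
    have := y.isLt
    simp only [pow_zero] at hy
    omega
  have hunit : ∀ x, s(x, x + 1) ∈ Sym2.map Fin.val '' C → x = m := by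
    rintro x ⟨_, hk, hx⟩
    rw [hCe] at hk
    obtain ⟨k, rfl⟩ := hk
    obtain ⟨a, ha⟩ := (hmem k).2
    obtain ⟨rfl, hk0⟩ := Sym2.add_two_pow_inj (ha.symm.trans (hx.trans (by rw [pow_zero])))
    obtain rfl : k = 0 := Fin.ext hk0
    exact (Sym2.add_two_pow_inj (ha.symm.trans hm0)).1
  refine ⟨m, hm, (Set.eq_of_subset_of_ncard_le ?_ ?_ (Set.toFinite _)).symm⟩
  · rintro e' ⟨k, hk, he'⟩
    obtain ⟨e'', he'', heq⟩ := hC.natCutEdge_mem hm hk hunit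
    rwa [← Sym2.map.injective Fin.val_injective (heq.trans he')]
  · rwa [ncard_crossingCut hm]

end IsSTCut

lemma minSTCut_iff {C : Set (Sym2 (Fin (2 ^ q + 1)))} :
    MinSTCut q C ↔ ∃ m < 2 ^ q, C = crossingCut q m := by
  constructor
  · rintro ⟨-, hC, hmin⟩
    have h0 := Nat.two_pow_pos q
    exact hC.eq_crossingCut (ncard_crossingCut h0 ▸
      hmin _ (crossingCut_subset_edgeSet 0) (isSTCut_crossingCut h0))
  · rintro ⟨m, hm, rfl⟩
    exact ⟨crossingCut_subset_edgeSet m, isSTCut_crossingCut hm,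
      fun C' _ hC' => ncard_crossingCut hm ▸ hC'.succ_le_ncard_s8⟩

namespace DualTree

variable {q : ℕ}

def parent (v : Fin (2 ^ (q + 1))) : Fin (2 ^ (q + 1)) :=
  ⟨v.val / 2, (Nat.div_le_self _ _).trans_lt v.isLt⟩

lemma adj_parent {v : Fin (2 ^ (q + 1))} (h : v.val ≠ 0) : (dualTree q).Adj v (parent v) :=
  Or.inl ⟨h, rfl⟩

def walkToRoot (v : Fin (2 ^ (q + 1))) : (dualTree q).Walk v (dualRoot q) :=
  if h : v.val = 0 then
    Walk.nil.copy (Fin.ext h).symm rfl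
  else
    Walk.cons (adj_parent h) (walkToRoot (parent v))
termination_by v.val
decreasing_by exact Nat.div_lt_self (Nat.pos_of_ne_zero h) one_lt_two

lemma walkToRoot_of_eq_zero {v : Fin (2 ^ (q + 1))} (h : v.val = 0) :
    walkToRoot v = Walk.nil.copy (Fin.ext h).symm rfl := by
  rw [walkToRoot, dif_pos h]

lemma walkToRoot_of_ne_zero {v : Fin (2 ^ (q + 1))} (h : v.val ≠ 0) :
    walkToRoot v = Walk.cons (adj_parent h) (walkToRoot (parent v)) := by
  rw [walkToRoot, dif_neg h]

lemma le_of_mem_support_walkToRoot {u v : Fin (2 ^ (q + 1))} (hu : u ∈ (walkToRoot v).support) :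
    u.val ≤ v.val := by
  induction v using walkToRoot.induct with
  | case1 v h =>
    rw [walkToRoot_of_eq_zero h, Walk.support_copy, Walk.support_nil, List.mem_singleton] at hu
    simp [hu, dualRoot]
  | case2 v h ih =>
    rw [walkToRoot_of_ne_zero h, Walk.support_cons, List.mem_cons] at hu
    rcases hu with rfl | hu
    · exact le_rfl
    · exact (ih hu).trans (Nat.div_le_self _ _)

lemma isPath_walkToRoot (v : Fin (2 ^ (q + 1))) : (walkToRoot v).IsPath := by
  induction v using walkToRoot.induct with
  | case1 v h => simp [walkToRoot_of_eq_zero h]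
  | case2 v h ih =>
    rw [walkToRoot_of_ne_zero h, Walk.cons_isPath_iff]
    refine ⟨ih, fun hv => ?_⟩
    have := le_of_mem_support_walkToRoot hv
    simp only [parent] at this
    omega

/-- A path from `v` up to the root can only move to parents: stepping to a child `c` would
revisit `c`'s parent `v` on the way up. -/
lemma eq_walkToRoot_of_isPath {v r : Fin (2 ^ (q + 1))} (w : (dualTree q).Walk v r)
    (hr : r = dualRoot q) (hw : w.IsPath) : w.copy rfl hr = walkToRoot v := by
  induction w with
  | nil =>
    subst hr
    simp [walkToRoot_of_eq_zero (v := dualRoot q) rfl]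
  | @cons v c r h p ih =>
    subst hr
    obtain ⟨hp, hv⟩ := (Walk.cons_isPath_iff h p).mp hw
    have hp' : p = walkToRoot c := by simpa using ih rfl hp
    rcases h with ⟨hv0, hc⟩ | ⟨hc0, hc⟩
    · obtain rfl : c = parent v := Fin.ext hc
      rw [Walk.copy_rfl_rfl, walkToRoot_of_ne_zero hv0, hp']
    · obtain rfl : v = parent c := Fin.ext hc
      rw [hp', walkToRoot_of_ne_zero hc0, Walk.support_cons] at hv
      exact absurd (List.mem_cons_of_mem _ (Walk.start_mem_support _)) hv

lemma mem_edges_walkToRoot {v : Fin (2 ^ (q + 1))} {e : Sym2 (Fin (2 ^ (q + 1)))} :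
    e ∈ (walkToRoot v).edges ↔
      ∃ j, v.val / 2 ^ j ≠ 0 ∧ Sym2.map Fin.val e = s(v.val / 2 ^ j, v.val / 2 ^ (j + 1)) := by
  induction v using walkToRoot.induct with
  | case1 v h => simp [walkToRoot_of_eq_zero h, h]
  | case2 v h ih =>
    have hroot : e = s(v, parent v) ↔ Sym2.map Fin.val e = s(v.val, v.val / 2) := by
      rw [← (Sym2.map.injective Fin.val_injective).eq_iff, Sym2.map_mk]; rfl
    rw [walkToRoot_of_ne_zero h, Walk.edges_cons, List.mem_cons, ih, hroot,
      ← Nat.or_exists_add_one (p := fun j => v.val / 2 ^ j ≠ 0 ∧ _)]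
    simp only [parent, pow_zero, Nat.div_one, zero_add, pow_one, Nat.div_div_eq_div_mul,
      ← pow_succ', h, ne_eq, not_false_eq_true, true_and]

lemma leaf_div_two_pow {m j : ℕ} (hj : j ≤ q) : (2 ^ q + m) / 2 ^ j = 2 ^ (q - j) + m / 2 ^ j := by
  rw [Nat.add_div_of_dvd_right (pow_dvd_pow 2 hj), Nat.pow_div hj two_pos]

lemma log_leaf {m : ℕ} (hm : m < 2 ^ q) : Nat.log 2 (2 ^ q + m) = q :=
  Nat.log_eq_of_pow_le_of_lt_pow (Nat.le_add_right _ _) (by rw [pow_succ]; omega)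

lemma leaf_div_two_pow_ne_zero_iff {m j : ℕ} (hm : m < 2 ^ q) :
    (2 ^ q + m) / 2 ^ j ≠ 0 ↔ j ≤ q := by
  rw [ne_eq, Nat.div_eq_zero_iff, not_or, not_lt, ← Nat.le_log_iff_pow_le one_lt_two (by positivity),
    log_leaf hm]
  simp

lemma primalOfNode_leaf_div {m j : ℕ} (hm : m < 2 ^ q) (hj : j ≤ q) :
    primalOfNode q ((2 ^ q + m) / 2 ^ j) = natCutEdge m j := by
  rw [primalOfNode, Nat.log_div_base_pow, log_leaf hm, leaf_div_two_pow hj,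
    Nat.add_sub_cancel_left, Nat.sub_sub_self hj, natCutEdge, add_one_mul]

lemma primalOfDualEdge_of_map_val {e : Sym2 (Fin (2 ^ (q + 1)))} {a b : ℕ}
    (he : Sym2.map Fin.val e = s(a, b)) (hba : b ≤ a) : primalOfDualEdge q e = primalOfNode q a := by
  induction e using Sym2.ind with
  | _ x y =>
    rw [primalOfDualEdge, Sym2.lift_mk]
    rcases Sym2.eq_iff.mp ((Sym2.map_mk _ _ _).symm.trans he) with ⟨hx, hy⟩ | ⟨hx, hy⟩
    · simp [hx, hy, hba]
    · simp [hx, hy, hba]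

lemma image_primalOfDualEdge_walkToRoot {m : ℕ} (hm : m < 2 ^ q) {v : Fin (2 ^ (q + 1))}
    (hv : v.val = 2 ^ q + m) :
    primalOfDualEdge q '' {e | e ∈ (walkToRoot v).edges} = natCutEdge m '' Set.Iic q := by
  have hdiv : ∀ j, (2 ^ q + m) / 2 ^ (j + 1) ≤ (2 ^ q + m) / 2 ^ j := fun j =>
    Nat.div_le_div_left (Nat.pow_le_pow_right two_pos (Nat.le_succ j)) (by positivity)
  have hlt : ∀ j, (2 ^ q + m) / 2 ^ j < 2 ^ (q + 1) := fun j =>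
    hv ▸ (Nat.div_le_self _ _).trans_lt v.isLt
  ext E
  simp only [Set.mem_image, Set.mem_ofPred_eq, mem_edges_walkToRoot, hv,
    leaf_div_two_pow_ne_zero_iff hm, Set.mem_Iic]
  constructor
  · rintro ⟨e, ⟨j, hj, he⟩, rfl⟩
    exact ⟨j, hj, by rw [primalOfDualEdge_of_map_val he (hdiv j), primalOfNode_leaf_div hm hj]⟩
  · rintro ⟨j, hj, rfl⟩
    refine ⟨s(⟨_, hlt j⟩, ⟨_, hlt (j + 1)⟩), ⟨j, hj, rfl⟩, ?_⟩
    rw [primalOfDualEdge_of_map_val rfl (hdiv j), primalOfNode_leaf_div hm hj]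

lemma eq_reverse_walkToRoot {ℓ : Fin (2 ^ (q + 1))} {w : (dualTree q).Walk (dualRoot q) ℓ}
    (hw : w.IsPath) : w = (walkToRoot ℓ).reverse := by
  rw [← eq_walkToRoot_of_isPath w.reverse rfl hw.reverse, Walk.copy_rfl_rfl, Walk.reverse_reverse]

end DualTree

open DualTree

abbrev RootLeafPath (q : ℕ) :=
  {pl : Σ ℓ : Fin (2 ^ (q + 1)), (dualTree q).Walk (dualRoot q) ℓ // IsDualLeaf q pl.1 ∧ pl.2.IsPath}

namespace RootLeafPath

variable {q : ℕ}

def leafIndex (x : RootLeafPath q) : ℕ := x.val.1.val - 2 ^ q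

lemma leafIndex_lt (x : RootLeafPath q) : x.leafIndex < 2 ^ q := by
  have := x.val.1.isLt
  have := pow_succ 2 q
  unfold leafIndex
  omega

lemma two_pow_add_leafIndex (x : RootLeafPath q) : 2 ^ q + x.leafIndex = x.val.1.val := by
  have : 2 ^ q ≤ x.val.1.val := x.property.1
  unfold leafIndex
  omega

def minCut (x : RootLeafPath q) : {C : Set (Sym2 (Fin (2 ^ q + 1))) // MinSTCut q C} :=
  ⟨crossingCut q x.leafIndex, minSTCut_iff.mpr ⟨_, x.leafIndex_lt, rfl⟩⟩

lemma image_val_minCut (x : RootLeafPath q) :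
    Sym2.map Fin.val '' (minCut x).val = primalOfDualEdge q '' {e | e ∈ x.val.2.edges} := by
  rw [minCut, image_val_crossingCut x.leafIndex_lt, eq_reverse_walkToRoot x.property.2,
    ← image_primalOfDualEdge_walkToRoot x.leafIndex_lt (two_pow_add_leafIndex x).symm]
  simp only [Walk.edges_reverse, List.mem_reverse]

lemma minCut_bijective : Function.Bijective (minCut (q := q)) := by
  constructor
  · intro x y h
    have hidx := crossingCut_injOn x.leafIndex_lt y.leafIndex_lt (congrArg Subtype.val h)
    have hleaf : x.val.1 = y.val.1 :=
      Fin.ext (by rw [← two_pow_add_leafIndex, ← two_pow_add_leafIndex, hidx])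
    obtain ⟨⟨ℓ, w⟩, _, hw : w.IsPath⟩ := x
    obtain ⟨⟨ℓ', w'⟩, _, hw' : w'.IsPath⟩ := y
    obtain rfl : ℓ = ℓ' := hleaf
    rw [Subtype.mk.injEq, eq_reverse_walkToRoot hw, eq_reverse_walkToRoot hw']
  · rintro ⟨C, hC⟩
    obtain ⟨m, hm, rfl⟩ := minSTCut_iff.mp hC
    have := pow_succ 2 q
    let ℓ : Fin (2 ^ (q + 1)) := ⟨2 ^ q + m, by omega⟩
    refine ⟨⟨⟨ℓ, (walkToRoot ℓ).reverse⟩, Nat.le_add_right _ _, (isPath_walkToRoot ℓ).reverse⟩, ?_⟩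
    simp [minCut, leafIndex, ℓ]

end RootLeafPath

/-- there is a one-to-one correspondence between root-leaf paths in the
dual structure `T_q` and minimum `σ`-`τ` edge cuts of `△_q`; the cut corresponding to
a root-leaf path is precisely the set of `△_q`-edges dual to the edges of the path. -/
theorem dual_tree_paths_correspond_to_min_cuts (q : ℕ) :
    ∃ Φ : {pl : Σ ℓ : Fin (2 ^ (q + 1)), (dualTree q).Walk (dualRoot q) ℓ //
            IsDualLeaf q pl.1 ∧ pl.2.IsPath} ≃
          {C : Set (Sym2 (Fin (2 ^ q + 1))) // MinSTCut q C},
      ∀ x, Sym2.map Fin.val '' (Φ x).val =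
        primalOfDualEdge q '' {e | e ∈ x.val.2.edges} :=
  ⟨Equiv.ofBijective _ RootLeafPath.minCut_bijective, RootLeafPath.image_val_minCut⟩
end

section
/- Let D be a set of edges of the q-T-fractal △_q such that △_q − D is connected. Then every vertex x of △_q satisfies dist_{△_q − D}(σ, x) ≤ q + |D| + 1. -/
/-! Model `△_j` on a dyadic interval `[a, a + 2 ^ j]` (with `2 ^ j ∣ a`) of the infinite T-fractal
on `ℕ`; then `△_{j+1}` is its two halves glued at the midpoint plus the edge joining the ends.
Induct on `j`, bounding distances from both terminals at once: when `d` edges are missing and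
the terminals are still connected, every vertex reachable from a terminal is within `j + d + 1`
of it; when they are separated, within `d`. The second bound holds because separating the
terminals of `△_j` costs at least `j + 1` edges, and it is what makes a detour through a broken
half affordable. -/

namespace SimpleGraph

variable {V W : Type*} {G G₁ G₂ E : SimpleGraph V} {S S₁ S₂ : Set V} {p m p' s t u v w x : V}

lemma Reachable.mem_of_support_subset (hS : G.support ⊆ S) (h : G.Reachable u v) (hu : u ∈ S) :
    v ∈ S := by
  rw [reachable_iff_reflTransGen] at h
  induction h with
  | refl => exact hu
  | tail _ hadj _ => exact hS ⟨_, hadj.symm⟩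

lemma Hom.edist_le {H : SimpleGraph W} (f : G →g H) (u v : V) :
    H.edist (f u) (f v) ≤ G.edist u v := by
  by_cases hr : G.Reachable u v
  · obtain ⟨c, hc⟩ := hr.exists_walk_length_eq_edist
    rw [← hc, ← c.length_map f]
    exact SimpleGraph.edist_le _
  · rw [edist_eq_top_of_not_reachable hr]
    exact le_top

lemma edist_le_of_le_add {a b n : ℕ} (h₁ : G.edist u v ≤ a) (h₂ : G.edist v w ≤ b)
    (h : a + b ≤ n) : G.edist u w ≤ n :=
  G.edist_triangle.trans <| (add_le_add h₁ h₂).trans <| by exact_mod_cast h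

lemma edist_le_one_of_adj (h : G.Adj u v) : G.edist u v ≤ ↑(1 : ℕ) :=
  (edist_eq_one_iff_adj.mpr h).le

/-- One step of the T-fractal recursion: `G₁ ⊔ G₂` is glued at the cut vertex `m`. -/
structure IsGluing (G₁ G₂ : SimpleGraph V) (S₁ S₂ : Set V) (p m p' : V) : Prop where
  support_left : G₁.support ⊆ S₁
  support_right : G₂.support ⊆ S₂
  inter_subset : S₁ ∩ S₂ ⊆ {m}
  left_mem : p ∈ S₁
  cut_mem_left : m ∈ S₁
  cut_mem_right : m ∈ S₂
  right_mem : p' ∈ S₂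

lemma IsGluing.symm (h : IsGluing G₁ G₂ S₁ S₂ p m p') : IsGluing G₂ G₁ S₂ S₁ p' m p :=
  ⟨h.support_right, h.support_left, Set.inter_comm S₁ S₂ ▸ h.inter_subset, h.right_mem,
    h.cut_mem_right, h.cut_mem_left, h.left_mem⟩

def ReachableVia (G₁ G₂ : SimpleGraph V) (m u x : V) : Prop :=
  G₁.Reachable u x ∨ G₁.Reachable u m ∧ G₂.Reachable m x

lemma ReachableVia.of_adj (hg : IsGluing G₁ G₂ S₁ S₂ p m p') (h : ReachableVia G₁ G₂ m p v)
    (hvw : (G₁ ⊔ G₂).Adj v w) : ReachableVia G₁ G₂ m p w := by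
  have eq_cut : v ∈ S₁ → v ∈ S₂ → v = m := fun h₁ h₂ => hg.inter_subset ⟨h₁, h₂⟩
  rcases hvw with hvw | hvw <;> rcases h with hpv | ⟨hpm, hmv⟩
  · exact .inl (hpv.trans hvw.reachable)
  · have hv : v = m := eq_cut (hg.support_left ⟨w, hvw⟩)
      (hmv.mem_of_support_subset hg.support_right hg.cut_mem_right)
    exact .inl (hpm.trans (hv ▸ hvw).reachable)
  · have hv : v = m := eq_cut (hpv.mem_of_support_subset hg.support_left hg.left_mem)
      (hg.support_right ⟨w, hvw⟩)
    exact .inr ⟨hv ▸ hpv, (hv ▸ hvw).reachable⟩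
  · exact .inr ⟨hpm, hmv.trans hvw.reachable⟩

lemma ReachableVia.mono (h : ReachableVia G₁ G₂ m u x) : (G₁ ⊔ G₂ ⊔ E).Reachable u x := by
  have h₁ : G₁ ≤ G₁ ⊔ G₂ ⊔ E := le_sup_left.trans le_sup_left
  have h₂ : G₂ ≤ G₁ ⊔ G₂ ⊔ E := le_sup_right.trans le_sup_left
  rcases h with h | ⟨hum, hmx⟩
  exacts [h.mono h₁, (hum.mono h₁).trans (hmx.mono h₂)]

lemma reachableVia_of_reachable (hg : IsGluing G₁ G₂ S₁ S₂ p m p') (hE : E ≤ edge p p')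
    (h : (G₁ ⊔ G₂ ⊔ E).Reachable p x) :
    ReachableVia G₁ G₂ m p x ∨ E.Adj p p' ∧ ReachableVia G₂ G₁ m p' x := by
  rw [reachable_iff_reflTransGen] at h
  induction h with
  | refl => exact .inl (.inl .rfl)
  | tail _ hvw ih =>
    rcases hvw with hvw | hvw
    · exact ih.imp (·.of_adj hg hvw) (And.imp_right (·.of_adj hg.symm (sup_comm G₁ G₂ ▸ hvw)))
    · obtain ⟨⟨rfl, rfl⟩ | ⟨rfl, rfl⟩, -⟩ := (edge_adj _ _ _ _).mp (hE hvw)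
      exacts [.inr ⟨hvw, .inl .rfl⟩, .inl (.inl .rfl)]

lemma reachable_glue_iff (hg : IsGluing G₁ G₂ S₁ S₂ p m p') (hE : E ≤ edge p p') :
    (G₁ ⊔ G₂ ⊔ E).Reachable p p' ↔ E.Adj p p' ∨ G₁.Reachable p m ∧ G₂.Reachable m p' := by
  refine ⟨fun h => ?_, ?_⟩
  · rcases reachableVia_of_reachable hg hE h with (h | h) | ⟨he, -⟩
    · have hp' : p' = m := hg.inter_subset
        ⟨h.mem_of_support_subset hg.support_left hg.left_mem, hg.right_mem⟩
      exact .inr ⟨hp' ▸ h, hp' ▸ .rfl⟩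
    exacts [.inr h, .inl he]
  · rintro (he | h)
    exacts [he.reachable.mono le_sup_right, ReachableVia.mono (.inr h)]

open Classical in
/-- The invariant of the T-fractal recursion for a copy of `△_j` with terminals `s, t` from which
`d` edges were deleted. -/
structure TerminalBounds (G : SimpleGraph V) (s t : V) (j d : ℕ) : Prop where
  cut : ¬G.Reachable s t → j + 1 ≤ d
  edist_terminals : G.Reachable s t → G.edist s t ≤ ↑(d + 1)
  edist_left : ∀ x, G.Reachable s x → G.edist s x ≤ ↑(d + if G.Reachable s t then j + 1 else 0)
  edist_right : ∀ x, G.Reachable t x → G.edist t x ≤ ↑(d + if G.Reachable s t then j + 1 else 0)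

namespace TerminalBounds

variable {j d d₁ d₂ : ℕ}

lemma symm (h : TerminalBounds G s t j d) : TerminalBounds G t s j d where
  cut hts := h.cut fun hst => hts hst.symm
  edist_terminals hts := G.edist_comm ▸ h.edist_terminals hts.symm
  edist_left x hx := by
    rw [show G.Reachable t s ↔ G.Reachable s t from reachable_comm]
    exact h.edist_right x hx
  edist_right x hx := by
    rw [show G.Reachable t s ↔ G.Reachable s t from reachable_comm]
    exact h.edist_left x hx

lemma edist_left_le (h : TerminalBounds G s t j d) (hx : G.Reachable s x) :
    G.edist s x ≤ ↑(d + j + 1) := by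
  refine (h.edist_left x hx).trans (Nat.cast_le.mpr ?_)
  split_ifs <;> omega

lemma edist_left_le_of_not_reachable (h : TerminalBounds G s t j d) (hst : ¬G.Reachable s t)
    (hx : G.Reachable s x) : G.edist s x ≤ d := by
  simpa [hst] using h.edist_left x hx

lemma of_le_edge (hG : G ≤ edge s t) (hd : ¬G.Adj s t → 0 < d) :
    TerminalBounds G s t 0 d := by
  by_cases hst : G.Adj s t
  · have hS : G.support ⊆ {s, t} := fun v ⟨w, hvw⟩ => by
      obtain ⟨⟨rfl, rfl⟩ | ⟨rfl, rfl⟩, -⟩ := (edge_adj _ _ _ _).mp (hG hvw) <;> simp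
    have near : ∀ u ∈ ({s, t} : Set V), ∀ x, G.Reachable u x → G.edist u x ≤ ↑(d + (0 + 1)) := by
      intro u hu x hx
      refine le_trans ?_ (Nat.cast_le.mpr (Nat.le_add_left 1 d))
      rw [Nat.cast_one, edist_le_one_iff_adj_or_eq]
      rcases hu with rfl | rfl <;> rcases hx.mem_of_support_subset hS (by simp) with rfl | rfl <;>
        simp [hst, hst.symm]
    exact ⟨fun h => absurd hst.reachable h, fun _ => near s (by simp) t hst.reachable,
      fun x hx => by simpa [hst.reachable] using near s (by simp) x hx,
      fun x hx => by simpa [hst.reachable] using near t (by simp) x hx⟩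
  · have hbot : G = ⊥ := le_bot_iff.mp fun u v huv => by
      obtain ⟨⟨rfl, rfl⟩ | ⟨rfl, rfl⟩, -⟩ := (edge_adj _ _ _ _).mp (hG huv)
      exacts [hst huv, hst huv.symm]
    subst hbot
    refine ⟨fun _ => hd hst, fun h => ?_, fun x hx => ?_, fun x hx => ?_⟩ <;>
      obtain rfl := reachable_bot.mp ‹_› <;> simp

lemma glue_cut (hg : IsGluing G₁ G₂ S₁ S₂ p m p') (hE : E ≤ edge p p')
    (h₁ : TerminalBounds G₁ p m j d₁) (h₂ : TerminalBounds G₂ m p' j d₂)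
    (hdE : ¬E.Adj p p' → d₁ + d₂ < d) (hJ : ¬(G₁ ⊔ G₂ ⊔ E).Reachable p p') :
    j + 1 + 1 ≤ d := by
  rw [reachable_glue_iff hg hE, not_or, not_and_or] at hJ
  have := hdE hJ.1
  rcases hJ.2 with hJ₁ | hJ₂
  · have := h₁.cut hJ₁; omega
  · have := h₂.cut hJ₂; omega

lemma glue_edist_terminals (hg : IsGluing G₁ G₂ S₁ S₂ p m p')
    (hE : E ≤ edge p p') (h₁ : TerminalBounds G₁ p m j d₁) (h₂ : TerminalBounds G₂ m p' j d₂)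
    (hdE : ¬E.Adj p p' → d₁ + d₂ < d) (hJ : (G₁ ⊔ G₂ ⊔ E).Reachable p p') :
    (G₁ ⊔ G₂ ⊔ E).edist p p' ≤ ↑(d + 1) := by
  by_cases he : E.Adj p p'
  · exact (edist_le_one_of_adj (Or.inr he)).trans (Nat.cast_le.mpr (by omega))
  have := hdE he
  obtain ⟨hpm, hmp'⟩ := ((reachable_glue_iff hg hE).mp hJ).resolve_left he
  exact edist_le_of_le_add
    ((edist_anti (le_sup_left.trans le_sup_left)).trans (h₁.edist_terminals hpm))
    ((edist_anti (le_sup_right.trans le_sup_left)).trans (h₂.edist_terminals hmp')) (by omega)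

lemma glue_edist_left_of_reachable (hg : IsGluing G₁ G₂ S₁ S₂ p m p')
    (hE : E ≤ edge p p') (h₁ : TerminalBounds G₁ p m j d₁) (h₂ : TerminalBounds G₂ m p' j d₂)
    (hd : d₁ + d₂ ≤ d) (hx : (G₁ ⊔ G₂ ⊔ E).Reachable p x) :
    (G₁ ⊔ G₂ ⊔ E).edist p x ≤ ↑(d + (j + 1 + 1)) := by
  have hG₁ : G₁ ≤ G₁ ⊔ G₂ ⊔ E := le_sup_left.trans le_sup_left
  have hG₂ : G₂ ≤ G₁ ⊔ G₂ ⊔ E := le_sup_right.trans le_sup_left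
  have within_left : G₁.Reachable p x → (G₁ ⊔ G₂ ⊔ E).edist p x ≤ ↑(d + (j + 1 + 1)) :=
    fun hx₁ => (edist_anti hG₁).trans <| (h₁.edist_left_le hx₁).trans <|
      Nat.cast_le.mpr (by omega)
  rcases reachableVia_of_reachable hg hE hx with (hx₁ | ⟨hpm, hmx⟩) | ⟨he, hx₂ | ⟨hp'm, hmx⟩⟩
  · exact within_left hx₁
  · exact edist_le_of_le_add ((edist_anti hG₁).trans (h₁.edist_terminals hpm))
      ((edist_anti hG₂).trans (h₂.edist_left_le hmx)) (by omega)
  · exact edist_le_of_le_add (edist_le_one_of_adj (Or.inr he))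
      ((edist_anti hG₂).trans (h₂.symm.edist_left_le hx₂)) (by omega)
  · by_cases hpm : G₁.Reachable p m
    · exact within_left (hpm.trans hmx)
    -- with `m` cut off from `p` inside `G₁`, the bound from `m` in `G₁` is the split bound `d₁`
    exact edist_le_of_le_add (edist_le_one_of_adj (Or.inr he))
      (edist_le_of_le_add ((edist_anti hG₂).trans (h₂.symm.edist_terminals hp'm))
        ((edist_anti hG₁).trans
          (h₁.symm.edist_left_le_of_not_reachable (fun h => hpm h.symm) hmx)) le_rfl)
      (by omega)

lemma glue_edist_left_of_not_reachable (hg : IsGluing G₁ G₂ S₁ S₂ p m p')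
    (hE : E ≤ edge p p') (h₁ : TerminalBounds G₁ p m j d₁) (h₂ : TerminalBounds G₂ m p' j d₂)
    (hdE : ¬E.Adj p p' → d₁ + d₂ < d) (hJ : ¬(G₁ ⊔ G₂ ⊔ E).Reachable p p')
    (hx : (G₁ ⊔ G₂ ⊔ E).Reachable p x) : (G₁ ⊔ G₂ ⊔ E).edist p x ≤ d := by
  have hG₁ : G₁ ≤ G₁ ⊔ G₂ ⊔ E := le_sup_left.trans le_sup_left
  have hG₂ : G₂ ≤ G₁ ⊔ G₂ ⊔ E := le_sup_right.trans le_sup_left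
  rw [reachable_glue_iff hg hE, not_or, not_and] at hJ
  have := hdE hJ.1
  rcases reachableVia_of_reachable hg hE hx with (hx₁ | ⟨hpm, hmx⟩) | ⟨he, -⟩
  · refine (edist_anti hG₁).trans ?_
    by_cases hpm : G₁.Reachable p m
    · have := h₂.cut (hJ.2 hpm)
      exact (h₁.edist_left_le hx₁).trans (Nat.cast_le.mpr (by omega))
    · exact (h₁.edist_left_le_of_not_reachable hpm hx₁).trans (Nat.cast_le.mpr (by omega))
  · exact edist_le_of_le_add ((edist_anti hG₁).trans (h₁.edist_terminals hpm))
      ((edist_anti hG₂).trans (h₂.edist_left_le_of_not_reachable (hJ.2 hpm) hmx)) (by omega)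
  · exact absurd he hJ.1

open Classical in
lemma glue_edist_left (hg : IsGluing G₁ G₂ S₁ S₂ p m p')
    (hE : E ≤ edge p p') (h₁ : TerminalBounds G₁ p m j d₁) (h₂ : TerminalBounds G₂ m p' j d₂)
    (hd : d₁ + d₂ ≤ d) (hdE : ¬E.Adj p p' → d₁ + d₂ < d) (hx : (G₁ ⊔ G₂ ⊔ E).Reachable p x) :
    (G₁ ⊔ G₂ ⊔ E).edist p x ≤
      ↑(d + if (G₁ ⊔ G₂ ⊔ E).Reachable p p' then j + 1 + 1 else 0) := by
  split_ifs with hJ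
  · exact glue_edist_left_of_reachable hg hE h₁ h₂ hd hx
  · exact glue_edist_left_of_not_reachable hg hE h₁ h₂ hdE hJ hx

open Classical in
theorem glue (hg : IsGluing G₁ G₂ S₁ S₂ p m p') (hE : E ≤ edge p p')
    (h₁ : TerminalBounds G₁ p m j d₁) (h₂ : TerminalBounds G₂ m p' j d₂)
    (hd : d₁ + d₂ ≤ d) (hdE : ¬E.Adj p p' → d₁ + d₂ < d) :
    TerminalBounds (G₁ ⊔ G₂ ⊔ E) p p' (j + 1) d where
  cut := glue_cut hg hE h₁ h₂ hdE
  edist_terminals := glue_edist_terminals hg hE h₁ h₂ hdE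
  edist_left _ := glue_edist_left hg hE h₁ h₂ hd hdE
  edist_right x hx := by
    have := glue_edist_left hg.symm (edge_comm p p' ▸ hE) h₂.symm h₁.symm (add_comm d₂ d₁ ▸ hd)
      (fun he => add_comm d₂ d₁ ▸ hdE fun he' => he he'.symm) (sup_comm G₁ G₂ ▸ hx)
    rwa [sup_comm G₂ G₁, show (G₁ ⊔ G₂ ⊔ E).Reachable p' p ↔ _ from reachable_comm] at this

end TerminalBounds

end SimpleGraph

lemma Nat.add_le_of_dvd_of_lt_s11 {n u v : ℕ} (hu : n ∣ u) (hv : n ∣ v) (h : u < v) : u + n ≤ v := by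
  have := Nat.le_of_dvd (by omega) (Nat.dvd_sub hv hu)
  omega

namespace TFractal

open SimpleGraph

/-- The T-fractal of infinite depth on `ℕ`: `u ~ u + 2 ^ l` whenever `2 ^ l ∣ u`. On a dyadic
interval `[a, a + 2 ^ j]`, `2 ^ j ∣ a`, it induces a copy of `△_j` with terminals `a` and
`a + 2 ^ j`. -/
def tInf : SimpleGraph ℕ where
  Adj u v := (∃ l, 2 ^ l ∣ u ∧ v = u + 2 ^ l) ∨ ∃ l, 2 ^ l ∣ v ∧ u = v + 2 ^ l
  symm := ⟨fun _ _ h => h.symm⟩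
  loopless := ⟨fun u h => by
    rcases h with ⟨l, -, h⟩ | ⟨l, -, h⟩ <;> have := Nat.two_pow_pos l <;> omega⟩

def block (j a : ℕ) : SimpleGraph ℕ where
  Adj u v := tInf.Adj u v ∧ u ∈ Set.Icc a (a + 2 ^ j) ∧ v ∈ Set.Icc a (a + 2 ^ j)
  symm := ⟨fun _ _ h => ⟨h.1.symm, h.2.2, h.2.1⟩⟩
  loopless := ⟨fun u h => tInf.loopless.irrefl u h.1⟩

variable {D : Set (Sym2 ℕ)} {j l a u : ℕ}

lemma block_adj_add_pow (h : 2 ^ j ∣ a) : (block j a).Adj a (a + 2 ^ j) :=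
  ⟨.inl ⟨j, h, rfl⟩, by simp, by simp⟩

lemma block_mono {j' a' : ℕ} (h : Set.Icc a' (a' + 2 ^ j') ⊆ Set.Icc a (a + 2 ^ j)) :
    block j' a' ≤ block j a :=
  fun _ _ huv => ⟨huv.1, h huv.2.1, h huv.2.2⟩

lemma block_zero_le : block 0 a ≤ edge a (a + 1) := by
  rintro u v ⟨huv, hu, hv⟩
  have hne := tInf.ne_of_adj huv
  simp only [pow_zero, Set.mem_Icc] at hu hv
  rw [edge_adj]
  omega

/-- An edge of the block at level `j + 1` lies in one of its two halves, or it is the edge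
joining the terminals. -/
lemma step_cases (ha : 2 ^ (j + 1) ∣ a) (hu : 2 ^ l ∣ u) (hau : a ≤ u)
    (hua : u + 2 ^ l ≤ a + 2 ^ (j + 1)) :
    u + 2 ^ l ≤ a + 2 ^ j ∨ a + 2 ^ j ≤ u ∨ u = a ∧ l = j + 1 := by
  rcases le_or_gt l j with hl | hl
  · have hm : 2 ^ l ∣ a + 2 ^ j :=
      dvd_add ((pow_dvd_pow 2 (by omega)).trans ha) (pow_dvd_pow 2 hl)
    rcases lt_or_ge u (a + 2 ^ j) with h | h
    exacts [.inl (Nat.add_le_of_dvd_of_lt_s11 hu hm h), .inr (.inl h)]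
  · have : 2 ^ (j + 1) ≤ 2 ^ l := Nat.pow_le_pow_right (by norm_num) hl
    have hl' : 2 ^ l = 2 ^ (j + 1) := by omega
    exact .inr (.inr ⟨by omega, Nat.pow_right_injective le_rfl hl'⟩)

lemma block_succ (ha : 2 ^ (j + 1) ∣ a) :
    block (j + 1) a = block j a ⊔ block j (a + 2 ^ j) ⊔ edge a (a + 2 ^ (j + 1)) := by
  have hpow := Nat.two_pow_succ j
  have hL : block j a ≤ block (j + 1) a := block_mono fun x hx => by
    simp only [Set.mem_Icc] at hx ⊢; omega
  have hR : block j (a + 2 ^ j) ≤ block (j + 1) a := block_mono fun x hx => by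
    simp only [Set.mem_Icc] at hx ⊢; omega
  have hT : edge a (a + 2 ^ (j + 1)) ≤ block (j + 1) a :=
    (edge_le_iff _).mpr (.inr (block_adj_add_pow ha))
  refine le_antisymm ?_ (sup_le (sup_le hL hR) hT)
  have step : ∀ u l, 2 ^ l ∣ u → (block (j + 1) a).Adj u (u + 2 ^ l) →
      (block j a ⊔ block j (a + 2 ^ j) ⊔ edge a (a + 2 ^ (j + 1))).Adj u (u + 2 ^ l) := by
    rintro u l hl ⟨huv, hu, hv⟩
    simp only [Set.mem_Icc] at hu hv
    rcases step_cases ha hl hu.1 hv.2 with h | h | ⟨rfl, rfl⟩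
    · exact .inl (.inl ⟨huv, by simp only [Set.mem_Icc]; omega, by simp only [Set.mem_Icc]; omega⟩)
    · exact .inl (.inr ⟨huv, by simp only [Set.mem_Icc]; omega, by simp only [Set.mem_Icc]; omega⟩)
    · exact .inr ((edge_adj _ _ _ _).mpr ⟨.inl ⟨rfl, rfl⟩, huv.ne⟩)
  rintro u v ⟨⟨l, hl, rfl⟩ | ⟨l, hl, rfl⟩, hu, hv⟩
  exacts [step u l hl ⟨.inl ⟨l, hl, rfl⟩, hu, hv⟩, (step v l hl ⟨.inl ⟨l, hl, rfl⟩, hv, hu⟩).symm]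

open Classical in
lemma ncard_inter_edgeSet_halves_le (hD : D.Finite) (ha : 2 ^ (j + 1) ∣ a) :
    (D ∩ (block j a).edgeSet).ncard + (D ∩ (block j (a + 2 ^ j)).edgeSet).ncard +
        (if s(a, a + 2 ^ (j + 1)) ∈ D then 1 else 0) ≤
      (D ∩ (block (j + 1) a).edgeSet).ncard := by
  have hpow := Nat.two_pow_succ j
  have hfin : ∀ {X : Set (Sym2 ℕ)}, (D ∩ X).Finite := hD.subset Set.inter_subset_left
  have hdisj : Disjoint (D ∩ (block j a).edgeSet) (D ∩ (block j (a + 2 ^ j)).edgeSet) := by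
    refine Set.disjoint_left.mpr fun e he₁ he₂ => ?_
    induction e using Sym2.ind with
    | _ u v =>
      obtain ⟨huv, hu, hv⟩ := he₁.2
      obtain ⟨-, hu', hv'⟩ := he₂.2
      simp only [Set.mem_Icc] at hu hv hu' hv'
      exact huv.ne (by omega)
  have htop : s(a, a + 2 ^ (j + 1)) ∉
      D ∩ (block j a).edgeSet ∪ D ∩ (block j (a + 2 ^ j)).edgeSet := by
    rintro (⟨-, ⟨-, -, hv⟩⟩ | ⟨-, ⟨-, hu, -⟩⟩) <;> simp only [Set.mem_Icc] at * <;> omega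
  have hsub : D ∩ (block j a).edgeSet ∪ D ∩ (block j (a + 2 ^ j)).edgeSet ⊆
      D ∩ (block (j + 1) a).edgeSet := by
    rw [block_succ ha, edgeSet_sup, edgeSet_sup]
    exact Set.union_subset (Set.inter_subset_inter_right _ (by grind))
      (Set.inter_subset_inter_right _ (by grind))
  rw [← Set.ncard_union_eq hdisj hfin hfin]
  split_ifs with ht
  · rw [← Set.ncard_insert_of_notMem htop (hfin.union hfin)]
    exact Set.ncard_le_ncard (Set.insert_subset ⟨ht, block_adj_add_pow ha⟩ hsub) hfin
  · exact Set.ncard_le_ncard hsub hfin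

lemma isGluing_block (D : Set (Sym2 ℕ)) (j a : ℕ) :
    IsGluing ((block j a).deleteEdges D) ((block j (a + 2 ^ j)).deleteEdges D)
      (Set.Icc a (a + 2 ^ j)) (Set.Icc (a + 2 ^ j) (a + 2 ^ (j + 1)))
      a (a + 2 ^ j) (a + 2 ^ (j + 1)) := by
  have hpow := Nat.two_pow_succ j
  have := Nat.two_pow_pos j
  refine ⟨fun v ⟨_, hvw⟩ => hvw.1.2.1, fun v ⟨_, hvw⟩ => ?_, fun v hv => ?_, ?_, ?_, ?_, ?_⟩
  · have := hvw.1.2.1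
    simp only [Set.mem_Icc] at this ⊢
    omega
  · simp only [Set.mem_Icc, Set.mem_inter_iff, Set.mem_singleton_iff] at hv ⊢
    omega
  all_goals simp only [Set.mem_Icc]; omega

theorem terminalBounds_block (hD : D.Finite) (j : ℕ) :
    ∀ a, 2 ^ j ∣ a → TerminalBounds ((block j a).deleteEdges D) a (a + 2 ^ j) j
      (D ∩ (block j a).edgeSet).ncard := by
  induction j with
  | zero =>
    intro a ha
    refine .of_le_edge ((deleteEdges_le _).trans block_zero_le) fun hadj => ?_
    have ht : s(a, a + 2 ^ 0) ∈ D := by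
      by_contra ht
      exact hadj ((deleteEdges_adj ..).mpr ⟨block_adj_add_pow ha, ht⟩)
    exact (Set.ncard_pos (hD.subset Set.inter_subset_left)).mpr ⟨_, ht, block_adj_add_pow ha⟩
  | succ j ih =>
    intro a ha
    have hpow := Nat.two_pow_succ j
    have ihL := ih a ((pow_dvd_pow 2 j.le_succ).trans ha)
    have ihR := ih (a + 2 ^ j) (dvd_add ((pow_dvd_pow 2 j.le_succ).trans ha) dvd_rfl)
    rw [show a + 2 ^ j + 2 ^ j = a + 2 ^ (j + 1) by omega] at ihR
    have hcount := ncard_inter_edgeSet_halves_le hD ha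
    nth_rw 1 [block_succ ha]
    rw [deleteEdges_sup, deleteEdges_sup]
    refine .glue (isGluing_block D j a) (deleteEdges_le _) ihL ihR ?_ fun hadj => ?_
    · split_ifs at hcount <;> omega
    · have ht : s(a, a + 2 ^ (j + 1)) ∈ D := by
        by_contra ht
        exact hadj ((deleteEdges_adj ..).mpr ⟨(edge_adj ..).mpr ⟨.inl ⟨rfl, rfl⟩, by omega⟩, ht⟩)
      rw [if_pos ht] at hcount
      omega

lemma fracAdjAux_iff {q u v : ℕ} (hv : v ≤ 2 ^ q) :
    fracAdjAux q u v ↔ ∃ l, 2 ^ l ∣ u ∧ v = u + 2 ^ l := by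
  refine ⟨fun ⟨i, _, hi, h⟩ => ⟨q - i, hi, h⟩, fun ⟨l, hl, h⟩ => ?_⟩
  have hlq : l ≤ q := (Nat.pow_le_pow_iff_right (show 1 < 2 by norm_num)).mp (by omega)
  exact ⟨q - l, Nat.sub_le q l, by rwa [Nat.sub_sub_self hlq], by rwa [Nat.sub_sub_self hlq]⟩

lemma adj_iff_block_adj {q : ℕ} {u v : Fin (2 ^ q + 1)} :
    (TFractal q).Adj u v ↔ (block q 0).Adj u v := by
  have hu : (u : ℕ) ≤ 2 ^ q := Nat.le_of_lt_succ u.isLt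
  have hv : (v : ℕ) ≤ 2 ^ q := Nat.le_of_lt_succ v.isLt
  change fracAdjAux q u v ∨ fracAdjAux q v u ↔ tInf.Adj u v ∧ _
  rw [fracAdjAux_iff hv, fracAdjAux_iff hu]
  exact ⟨fun h => ⟨h, ⟨Nat.zero_le _, by omega⟩, ⟨Nat.zero_le _, by omega⟩⟩, And.left⟩

lemma map_val_mem_image_iff {q : ℕ} {D : Set (Sym2 (Fin (2 ^ q + 1)))} {u v : Fin (2 ^ q + 1)} :
    s((u : ℕ), (v : ℕ)) ∈ Sym2.map Fin.val '' D ↔ s(u, v) ∈ D := by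
  rw [← Sym2.map_mk]
  exact (Sym2.map.injective Fin.val_injective).mem_set_image

def toBlock (q : ℕ) (D : Set (Sym2 (Fin (2 ^ q + 1)))) :
    (TFractal q).deleteEdges D →g (block q 0).deleteEdges (Sym2.map Fin.val '' D) where
  toFun := Fin.val
  map_rel' h := by
    rw [deleteEdges_adj] at h ⊢
    exact ⟨adj_iff_block_adj.mp h.1, map_val_mem_image_iff.not.mpr h.2⟩

/-- Vertices outside `[0, 2 ^ q]` are isolated in the block graph, so where they go is
irrelevant. -/
def ofBlock (q : ℕ) (D : Set (Sym2 (Fin (2 ^ q + 1)))) :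
    (block q 0).deleteEdges (Sym2.map Fin.val '' D) →g (TFractal q).deleteEdges D where
  toFun n := ⟨min n (2 ^ q), by omega⟩
  map_rel' {n n'} h := by
    rw [deleteEdges_adj] at h ⊢
    obtain ⟨⟨hadj, hn, hn'⟩, hD⟩ := h
    have hn₂ : n ≤ 2 ^ q := by simpa using hn.2
    have hn₂' : n' ≤ 2 ^ q := by simpa using hn'.2
    obtain ⟨u, rfl⟩ : ∃ u : Fin (2 ^ q + 1), (u : ℕ) = n := ⟨⟨n, by omega⟩, rfl⟩
    obtain ⟨v, rfl⟩ : ∃ v : Fin (2 ^ q + 1), (v : ℕ) = n' := ⟨⟨n', by omega⟩, rfl⟩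
    simp only [min_eq_left hn₂, min_eq_left hn₂']
    exact ⟨adj_iff_block_adj.mpr ⟨hadj, hn, hn'⟩, map_val_mem_image_iff.not.mp hD⟩

lemma ofBlock_val {q : ℕ} {D : Set (Sym2 (Fin (2 ^ q + 1)))} (u : Fin (2 ^ q + 1)) :
    ofBlock q D u = u :=
  Fin.ext (min_eq_left (by omega))

end TFractal

theorem tfractal_connected_distance_bound_general (q : ℕ) (D : Set (Sym2 (Fin (2 ^ q + 1))))
    (hconn : ((TFractal q).deleteEdges D).Connected) :
    ∀ x : Fin (2 ^ q + 1),
      ((TFractal q).deleteEdges D).dist (sigV q) x ≤ q + D.ncard + 1 := by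
  intro x
  set D' := Sym2.map Fin.val '' D
  have hbounds := TFractal.terminalBounds_block (D := D') (D.toFinite.image _) q 0 (dvd_zero _)
  have hreach : ((TFractal.block q 0).deleteEdges D').Reachable 0 x :=
    (hconn.preconnected (sigV q) x).map (TFractal.toBlock q D)
  have hcount : (D' ∩ (TFractal.block q 0).edgeSet).ncard ≤ D.ncard :=
    (Set.ncard_inter_le_ncard_left _ _ (D.toFinite.image _)).trans
      (Set.ncard_image_of_injective _ (Sym2.map.injective Fin.val_injective)).le
  refine ENat.toNat_le_of_le_natCast ?_
  calc ((TFractal q).deleteEdges D).edist (sigV q) x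
      = ((TFractal q).deleteEdges D).edist (TFractal.ofBlock q D 0) (TFractal.ofBlock q D x) := by
        rw [TFractal.ofBlock_val]; rfl
    _ ≤ _ := (TFractal.ofBlock q D).edist_le _ _
    _ ≤ _ := hbounds.edist_left_le hreach
    _ ≤ _ := Nat.cast_le.mpr (by omega)

/-- if `△_q − D` is connected, then every vertex `x` satisfies
`dist_{△_q − D}(σ, x) ≤ q + |D| + 1`. -/
theorem tfractal_connected_distance_bound (q : ℕ) (D : Set (Sym2 (Fin (2 ^ q + 1))))
    (hD : D ⊆ (TFractal q).edgeSet)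
    (hconn : ((TFractal q).deleteEdges D).Connected) :
    ∀ x : Fin (2 ^ q + 1),
      ((TFractal q).deleteEdges D).dist (sigV q) x ≤ q + D.ncard + 1 :=
  tfractal_connected_distance_bound_general q D hconn
end

section
/- Let D be a set of edges of the q-T-fractal △_q such that △_q − D has exactly two connected components, with σ and τ in different components. Then every vertex x of △_q satisfies min(dist_{△_q − D}(σ, x), dist_{△_q − D}(τ, x)) ≤ q + |D| − 1, where the distance is taken in the component containing x. -/
namespace SimpleGraph

variable {V W : Type*} {G G' : SimpleGraph V} {u v w : V} {m n : ℕ}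

def HasWalkWithin (G : SimpleGraph V) (u v : V) (n : ℕ) : Prop :=
  ∃ p : G.Walk u v, p.length ≤ n

namespace HasWalkWithin

lemma refl (G : SimpleGraph V) (u : V) (n : ℕ) : HasWalkWithin G u u n :=
  ⟨.nil, Nat.zero_le n⟩

lemma of_adj (h : G.Adj u v) : HasWalkWithin G u v 1 :=
  ⟨h.toWalk, le_rfl⟩

lemma weaken (h : HasWalkWithin G u v m) (hmn : m ≤ n) : HasWalkWithin G u v n :=
  let ⟨p, hp⟩ := h
  ⟨p, hp.trans hmn⟩

lemma trans (h₁ : HasWalkWithin G u v m) (h₂ : HasWalkWithin G v w n) :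
    HasWalkWithin G u w (m + n) :=
  let ⟨p, hp⟩ := h₁
  let ⟨q, hq⟩ := h₂
  ⟨p.append q, by rw [Walk.length_append]; omega⟩

lemma map {H : SimpleGraph W} (f : G →g H) (h : HasWalkWithin G u v n) :
    HasWalkWithin H (f u) (f v) n :=
  let ⟨p, hp⟩ := h
  ⟨p.map f, by rwa [Walk.length_map]⟩

lemma mono (hG : G ≤ G') (h : HasWalkWithin G u v n) : HasWalkWithin G' u v n :=
  h.map (Hom.ofLE hG)

lemma reachable (h : HasWalkWithin G u v n) : G.Reachable u v :=
  let ⟨p, _⟩ := h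
  ⟨p⟩

lemma dist_le (h : HasWalkWithin G u v n) : G.dist u v ≤ n :=
  let ⟨p, hp⟩ := h
  (SimpleGraph.dist_le p).trans hp

lemma of_map {H : SimpleGraph W} {f : V → W} (hf : f.Injective)
    (hlift : ∀ a y, H.Adj (f a) y → ∃ b, f b = y ∧ G.Adj a b)
    (h : HasWalkWithin H (f u) (f v) n) : HasWalkWithin G u v n := by
  suffices key : ∀ {x y : W} (p : H.Walk x y) (a : V), f a = x →
      ∃ b, f b = y ∧ HasWalkWithin G a b p.length by
    obtain ⟨p, hp⟩ := h
    obtain ⟨b, hb, hub⟩ := key p u rfl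
    exact (hf hb ▸ hub).weaken hp
  intro x y p
  induction p with
  | nil => exact fun a ha => ⟨a, ha, refl G a 0⟩
  | cons hxz p ih =>
    rintro a rfl
    obtain ⟨b, rfl, hab⟩ := hlift a _ hxz
    obtain ⟨c, hc, hbc⟩ := ih b rfl
    exact ⟨c, hc, by simpa [add_comm] using (of_adj hab).trans hbc⟩

end HasWalkWithin

/-- A walk of `G` ending in `S`, where `c` is the only vertex of `S` with `G`-edges outside `H`,
enters `S` for the last time through `c`, and stays in `H` from then on. -/
lemma Reachable.of_cutVertex {H : SimpleGraph V} {S : Set V} {c y t : V}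
    (hG : ∀ a b, G.Adj a b → a ∈ S → H.Adj a b ∨ a = c)
    (hH : ∀ a b, H.Adj a b → a ∈ S → b ∈ S) (h : G.Reachable y t) (ht : t ∈ S) :
    (y ∈ S → H.Reachable y t) ∧ (y ∉ S → H.Reachable c t) := by
  obtain ⟨p⟩ := h
  induction p with
  | nil => exact ⟨fun _ => .rfl, fun hy => absurd ht hy⟩
  | @cons a b _ hab p ih =>
    obtain ⟨ihS, ihN⟩ := ih ht
    by_cases hb : b ∈ S
    · rcases hG b a hab.symm hb with hba | rfl
      · exact ⟨fun _ => hba.symm.reachable.trans (ihS hb), fun ha => absurd (hH b a hba hb) ha⟩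
      · refine ⟨fun ha => ?_, fun _ => ihS hb⟩
        rcases hG a b hab ha with hab' | rfl
        · exact hab'.reachable.trans (ihS hb)
        · exact (G.irrefl hab).elim
    · refine ⟨fun ha => ?_, fun _ => ihN hb⟩
      rcases hG a b hab ha with hab' | rfl
      · exact absurd (hH a b hab' ha) hb
      · exact ihN hb

lemma Reachable.deleteEdges_singleton_or {p p' y x : V} (h : G.Reachable y x) :
    (G.deleteEdges {s(p, p')}).Reachable y x ∨ (G.deleteEdges {s(p, p')}).Reachable p x ∨
      (G.deleteEdges {s(p, p')}).Reachable p' x := by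
  obtain ⟨w⟩ := h
  induction w with
  | nil => exact .inl .rfl
  | @cons a b c hab w ih =>
    by_cases he : s(a, b) = s(p, p')
    · rcases Sym2.eq_iff.mp he with ⟨rfl, rfl⟩ | ⟨rfl, rfl⟩ <;> tauto
    · have hab' : (G.deleteEdges {s(p, p')}).Adj a b := by
        rw [deleteEdges_adj]
        exact ⟨hab, he⟩
      rcases ih with r | r | r
      · exact .inl (hab'.reachable.trans r)
      · exact .inr (.inl r)
      · exact .inr (.inr r)

end SimpleGraph

namespace TFractal

open SimpleGraph Set

def dyadicStep (A k a b : ℕ) : Prop :=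
  ∃ j ≤ k, 2 ^ j ∣ a ∧ b = a + 2 ^ j ∧ A ≤ a ∧ b ≤ A + 2 ^ k

/-- The T-fractal `△_k` on the block `[A, A + 2^k]` (for `2^k ∣ A`), with `σ = A` and
`τ = A + 2^k`; all other natural numbers are isolated. -/
def dyadicFractal (A k : ℕ) : SimpleGraph ℕ where
  Adj a b := dyadicStep A k a b ∨ dyadicStep A k b a
  symm := ⟨fun _ _ => Or.symm⟩
  loopless := ⟨fun a h => by
    rcases h with ⟨j, -, -, h, -⟩ | ⟨j, -, -, h, -⟩ <;>
      · have := Nat.two_pow_pos j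
        omega⟩

abbrev residual (A k : ℕ) (E : Set (Sym2 ℕ)) : SimpleGraph ℕ :=
  (dyadicFractal A k).deleteEdges E

noncomputable def numDeleted (A k : ℕ) (E : Set (Sym2 ℕ)) : ℕ :=
  (E ∩ (dyadicFractal A k).edgeSet).ncard

variable {A k a b x : ℕ} {E : Set (Sym2 ℕ)}

lemma dyadicStep.bounds (h : dyadicStep A k a b) : A ≤ a ∧ a < b ∧ b ≤ A + 2 ^ k := by
  obtain ⟨j, -, -, rfl, h₁, h₂⟩ := h
  have := Nat.two_pow_pos j
  omega

lemma dyadicFractal.adj_bounds (h : (dyadicFractal A k).Adj a b) :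
    A ≤ a ∧ a ≤ A + 2 ^ k ∧ A ≤ b ∧ b ≤ A + 2 ^ k := by
  rcases h with h | h <;>
  · have := h.bounds
    omega

lemma dyadicFractal_adj_top (hA : 2 ^ k ∣ A) : (dyadicFractal A k).Adj A (A + 2 ^ k) :=
  .inl ⟨k, le_rfl, hA, rfl, le_rfl, le_rfl⟩

lemma residual_adj_top (hA : 2 ^ k ∣ A) (htop : s(A, A + 2 ^ k) ∉ E) :
    (residual A k E).Adj A (A + 2 ^ k) :=
  (deleteEdges_adj ..).mpr ⟨dyadicFractal_adj_top hA, htop⟩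

lemma dyadicFractal_edgeSet_finite : (dyadicFractal A k).edgeSet.Finite := by
  have hfin : (Icc A (A + 2 ^ k)).sym2.Finite := by
    rw [sym2_eq_mk_image]
    exact ((finite_Icc _ _).prod (finite_Icc _ _)).image _
  refine hfin.subset fun e he => ?_
  induction e using Sym2.ind with
  | h a b =>
    have := dyadicFractal.adj_bounds he
    exact ⟨⟨this.1, this.2.1⟩, this.2.2⟩

lemma two_pow_dvd_of_succ (hA : 2 ^ (k + 1) ∣ A) : 2 ^ k ∣ A ∧ 2 ^ k ∣ A + 2 ^ k := by
  have hA' : 2 ^ k ∣ A := (pow_dvd_pow 2 k.le_succ).trans hA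
  exact ⟨hA', dvd_add hA' dvd_rfl⟩

lemma dyadicFractal_le_succ_left : dyadicFractal A k ≤ dyadicFractal A (k + 1) := by
  have hk : ∀ {a b}, dyadicStep A k a b → dyadicStep A (k + 1) a b :=
    fun ⟨j, hj, h⟩ => ⟨j, by omega, h.1, h.2.1, h.2.2.1, by rw [Nat.two_pow_succ]; omega⟩
  exact fun _ _ => Or.imp hk hk

lemma dyadicFractal_le_succ_right : dyadicFractal (A + 2 ^ k) k ≤ dyadicFractal A (k + 1) := by
  have hk : ∀ {a b}, dyadicStep (A + 2 ^ k) k a b → dyadicStep A (k + 1) a b :=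
    fun ⟨j, hj, h⟩ => ⟨j, by omega, h.1, h.2.1, by omega, by rw [Nat.two_pow_succ]; omega⟩
  exact fun _ _ => Or.imp hk hk

/-- A step of scale `2^j ≤ 2^k` cannot jump over the midpoint `A + 2^k`, a multiple of `2^j`. -/
lemma dyadicStep_succ (hA : 2 ^ (k + 1) ∣ A) (h : dyadicStep A (k + 1) a b) :
    (a = A ∧ b = A + 2 ^ (k + 1)) ∨ dyadicStep A k a b ∨ dyadicStep (A + 2 ^ k) k a b := by
  obtain ⟨j, hj, hdvd, rfl, h₁, h₂⟩ := h
  rw [Nat.two_pow_succ] at h₂ ⊢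
  rcases hj.lt_or_eq with hj | rfl
  · by_cases hmid : a + 2 ^ j ≤ A + 2 ^ k
    · exact .inr (.inl ⟨j, by omega, hdvd, rfl, h₁, hmid⟩)
    · have hjk : 2 ^ j ∣ A + 2 ^ k :=
        dvd_add ((pow_dvd_pow 2 hj.le).trans hA) (pow_dvd_pow 2 (by omega))
      have hgap : A + 2 ^ k ≤ a := by
        by_contra hlt
        have := Nat.le_of_dvd (by omega) (Nat.dvd_sub hjk hdvd)
        omega
      exact .inr (.inr ⟨j, by omega, hdvd, rfl, hgap, by omega⟩)
  · rw [Nat.two_pow_succ] at h₂ ⊢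
    exact .inl (by omega)

lemma dyadicFractal_succ_adj (hA : 2 ^ (k + 1) ∣ A) (h : (dyadicFractal A (k + 1)).Adj a b) :
    s(a, b) = s(A, A + 2 ^ (k + 1)) ∨ (dyadicFractal A k).Adj a b ∨
      (dyadicFractal (A + 2 ^ k) k).Adj a b := by
  rcases h with h | h
  · rcases dyadicStep_succ hA h with ⟨rfl, rfl⟩ | h | h
    exacts [.inl rfl, .inr (.inl (.inl h)), .inr (.inr (.inl h))]
  · rcases dyadicStep_succ hA h with ⟨rfl, rfl⟩ | h | h
    exacts [.inl Sym2.eq_swap, .inr (.inl (.inr h)), .inr (.inr (.inr h))]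

lemma numDeleted_halves_lt (hA : 2 ^ (k + 1) ∣ A) (htop : s(A, A + 2 ^ (k + 1)) ∈ E) :
    numDeleted A k E + numDeleted (A + 2 ^ k) k E < numDeleted A (k + 1) E := by
  unfold numDeleted
  set L := E ∩ (dyadicFractal A k).edgeSet
  set R := E ∩ (dyadicFractal (A + 2 ^ k) k).edgeSet
  have hdisj : Disjoint L R := by
    refine disjoint_left.mpr fun e hL hR => ?_
    induction e using Sym2.ind with
    | h a b =>
      have hL' := dyadicFractal.adj_bounds hL.2
      have hR' := dyadicFractal.adj_bounds hR.2
      obtain rfl : a = b := by omega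
      exact (dyadicFractal A k).irrefl hL.2
  have hnot : s(A, A + 2 ^ (k + 1)) ∉ L ∪ R := by
    rw [Nat.two_pow_succ]
    rintro (⟨-, h⟩ | ⟨-, h⟩) <;>
    · have := dyadicFractal.adj_bounds h
      have := Nat.two_pow_pos k
      omega
  have hsub : L ∪ R ⊆ E ∩ (dyadicFractal A (k + 1)).edgeSet :=
    union_subset (inter_subset_inter_right E (edgeSet_mono dyadicFractal_le_succ_left))
      (inter_subset_inter_right E (edgeSet_mono dyadicFractal_le_succ_right))
  have hfin (B j : ℕ) : (E ∩ (dyadicFractal B j).edgeSet).Finite :=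
    dyadicFractal_edgeSet_finite.inter_of_right E
  rw [← ncard_union_eq hdisj (hfin _ _) (hfin _ _)]
  refine ncard_lt_ncard ((ssubset_iff_of_subset hsub).mpr ?_) (hfin _ _)
  exact ⟨_, ⟨htop, dyadicFractal_adj_top hA⟩, hnot⟩

lemma numDeleted_insert_top (hA : 2 ^ k ∣ A) (htop : s(A, A + 2 ^ k) ∉ E) :
    numDeleted A k (insert s(A, A + 2 ^ k) E) = numDeleted A k E + 1 := by
  unfold numDeleted
  rw [insert_inter_of_mem (t := (dyadicFractal A k).edgeSet) (dyadicFractal_adj_top hA)]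
  exact ncard_insert_of_notMem (fun h => htop h.1) (dyadicFractal_edgeSet_finite.inter_of_right E)

lemma residual_le_succ_left : residual A k E ≤ residual A (k + 1) E :=
  deleteEdges_mono dyadicFractal_le_succ_left

lemma residual_le_succ_right : residual (A + 2 ^ k) k E ≤ residual A (k + 1) E :=
  deleteEdges_mono dyadicFractal_le_succ_right

-- Once the top edge is deleted, the midpoint `A + 2^k` separates the two halves.
lemma reachable_left_of_reachable (hA : 2 ^ (k + 1) ∣ A) (htop : s(A, A + 2 ^ (k + 1)) ∈ E)
    {y t : ℕ} (h : (residual A (k + 1) E).Reachable y t) (ht : t ∈ Icc A (A + 2 ^ k)) :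
    (y ∈ Icc A (A + 2 ^ k) → (residual A k E).Reachable y t) ∧
      (y ∉ Icc A (A + 2 ^ k) → (residual A k E).Reachable (A + 2 ^ k) t) := by
  refine h.of_cutVertex (fun a b hab ha => ?_) (fun a b hab _ => ?_) ht
  · rw [deleteEdges_adj] at hab
    rcases dyadicFractal_succ_adj hA hab.1 with he | hL | hR
    · exact absurd (he ▸ htop) hab.2
    · exact .inl ((deleteEdges_adj ..).mpr ⟨hL, hab.2⟩)
    · have := dyadicFractal.adj_bounds hR
      exact .inr (by have := ha.2; omega)
  · have := dyadicFractal.adj_bounds ((deleteEdges_adj ..).mp hab).1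
    exact ⟨this.2.2.1, this.2.2.2⟩

lemma reachable_right_of_reachable (hA : 2 ^ (k + 1) ∣ A) (htop : s(A, A + 2 ^ (k + 1)) ∈ E)
    {y t : ℕ} (h : (residual A (k + 1) E).Reachable y t)
    (ht : t ∈ Icc (A + 2 ^ k) (A + 2 ^ k + 2 ^ k)) :
    (y ∈ Icc (A + 2 ^ k) (A + 2 ^ k + 2 ^ k) → (residual (A + 2 ^ k) k E).Reachable y t) ∧
      (y ∉ Icc (A + 2 ^ k) (A + 2 ^ k + 2 ^ k) →
        (residual (A + 2 ^ k) k E).Reachable (A + 2 ^ k) t) := by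
  refine h.of_cutVertex (fun a b hab ha => ?_) (fun a b hab _ => ?_) ht
  · rw [deleteEdges_adj] at hab
    rcases dyadicFractal_succ_adj hA hab.1 with he | hL | hR
    · exact absurd (he ▸ htop) hab.2
    · have := dyadicFractal.adj_bounds hL
      exact .inr (by have := ha.1; omega)
    · exact .inl ((deleteEdges_adj ..).mpr ⟨hR, hab.2⟩)
  · have := dyadicFractal.adj_bounds ((deleteEdges_adj ..).mp hab).1
    exact ⟨this.2.2.1, this.2.2.2⟩

lemma reachable_left_of_connected (hA : 2 ^ (k + 1) ∣ A) (htop : s(A, A + 2 ^ (k + 1)) ∈ E)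
    (hconn : ∀ x ∈ Icc A (A + 2 ^ (k + 1)), (residual A (k + 1) E).Reachable A x) :
    ∀ x ∈ Icc A (A + 2 ^ k), (residual A k E).Reachable A x := fun x hx =>
  (reachable_left_of_reachable hA htop
    (hconn x ⟨hx.1, by have := hx.2; rw [Nat.two_pow_succ]; omega⟩) hx).1 ⟨le_rfl, by omega⟩

lemma reachable_right_of_connected (hA : 2 ^ (k + 1) ∣ A) (htop : s(A, A + 2 ^ (k + 1)) ∈ E)
    (hconn : ∀ x ∈ Icc A (A + 2 ^ (k + 1)), (residual A (k + 1) E).Reachable A x) :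
    ∀ x ∈ Icc (A + 2 ^ k) (A + 2 ^ k + 2 ^ k),
      (residual (A + 2 ^ k) k E).Reachable (A + 2 ^ k) x := fun x hx =>
  (reachable_right_of_reachable hA htop
    (hconn x ⟨by have := hx.1; omega, by have := hx.2; rw [Nat.two_pow_succ]; omega⟩) hx).2
    (fun h => by have := h.1; have := Nat.two_pow_pos k; omega)

lemma residual_zero_eq_bot (htop : s(A, A + 2 ^ 0) ∈ E) : residual A 0 E = ⊥ := by
  ext a b
  simp only [deleteEdges_adj, bot_adj, iff_false, not_and, not_not]
  intro h
  rcases h with h | h <;>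
  · have := h.bounds
    rw [pow_zero] at this htop
    obtain ⟨rfl, rfl⟩ | ⟨rfl, rfl⟩ : (a = A ∧ b = A + 1) ∨ (b = A ∧ a = A + 1) := by
      omega
    exacts [htop, Sym2.eq_swap ▸ htop]

lemma not_reachable_zero_of_top_mem (htop : s(A, A + 2 ^ 0) ∈ E) :
    ¬ (residual A 0 E).Reachable A (A + 2 ^ 0) := by
  rw [residual_zero_eq_bot htop, reachable_bot]
  omega

theorem hasWalkWithin_top_of_connected (hA : 2 ^ k ∣ A)
    (hconn : ∀ x ∈ Icc A (A + 2 ^ k), (residual A k E).Reachable A x) :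
    HasWalkWithin (residual A k E) A (A + 2 ^ k) (numDeleted A k E + 1) := by
  induction k generalizing A with
  | zero =>
    by_cases htop : s(A, A + 2 ^ 0) ∈ E
    · exact absurd (hconn _ ⟨by omega, le_rfl⟩) (not_reachable_zero_of_top_mem htop)
    · exact (HasWalkWithin.of_adj (residual_adj_top hA htop)).weaken (by omega)
  | succ k ih =>
    by_cases htop : s(A, A + 2 ^ (k + 1)) ∈ E
    · obtain ⟨hAk, hmk⟩ := two_pow_dvd_of_succ hA
      have hL := ih hAk (reachable_left_of_connected hA htop hconn)
      have hR := ih hmk (reachable_right_of_connected hA htop hconn)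
      have := numDeleted_halves_lt hA htop
      rw [add_assoc, ← Nat.two_pow_succ] at hR
      exact ((hL.mono residual_le_succ_left).trans (hR.mono residual_le_succ_right)).weaken
        (by omega)
    · exact (HasWalkWithin.of_adj (residual_adj_top hA htop)).weaken (by omega)

def reflect (A k x : ℕ) : ℕ := 2 * A + 2 ^ k - x

def reflectEdges (A k : ℕ) (E : Set (Sym2 ℕ)) : Set (Sym2 ℕ) :=
  Sym2.map (reflect A k) ⁻¹' E

lemma reflect_mem_Icc (hx : x ∈ Icc A (A + 2 ^ k)) : reflect A k x ∈ Icc A (A + 2 ^ k) := by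
  have := hx.1
  have := hx.2
  exact ⟨by unfold reflect; omega, by unfold reflect; omega⟩

lemma reflect_reflect (hx : x ∈ Icc A (A + 2 ^ k)) : reflect A k (reflect A k x) = x := by
  have := hx.2
  unfold reflect
  omega

lemma reflect_left : reflect A k A = A + 2 ^ k := by
  have := Nat.two_pow_pos k
  unfold reflect
  omega

lemma reflect_right : reflect A k (A + 2 ^ k) = A := by
  have := Nat.two_pow_pos k
  unfold reflect
  omega

lemma reflect_succ_mid : reflect A (k + 1) (A + 2 ^ k) = A + 2 ^ k := by
  have := Nat.two_pow_pos k
  unfold reflect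
  rw [Nat.two_pow_succ]
  omega

lemma dyadicStep_reflect (hA : 2 ^ k ∣ A) (h : dyadicStep A k a b) :
    dyadicStep A k (reflect A k b) (reflect A k a) := by
  obtain ⟨j, hj, hdvd, rfl, h₁, h₂⟩ := h
  have hjk : 2 ^ j ∣ 2 ^ k := pow_dvd_pow 2 hj
  have hjA : 2 ^ j ∣ 2 * A + 2 ^ k := dvd_add ((hjk.trans hA).mul_left 2) hjk
  refine ⟨j, hj, Nat.dvd_sub hjA (dvd_add hdvd dvd_rfl), ?_, ?_, ?_⟩ <;>
  · unfold reflect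
    omega

lemma dyadicFractal_adj_reflect (hA : 2 ^ k ∣ A) (h : (dyadicFractal A k).Adj a b) :
    (dyadicFractal A k).Adj (reflect A k a) (reflect A k b) :=
  (h.imp (dyadicStep_reflect hA) (dyadicStep_reflect hA)).symm

lemma map_reflect_mem_edgeSet (hA : 2 ^ k ∣ A) {e : Sym2 ℕ}
    (he : e ∈ (dyadicFractal A k).edgeSet) :
    Sym2.map (reflect A k) e ∈ (dyadicFractal A k).edgeSet := by
  induction e using Sym2.ind with
  | h a b => exact dyadicFractal_adj_reflect hA he

lemma map_reflect_map_reflect {e : Sym2 ℕ} (he : e ∈ (dyadicFractal A k).edgeSet) :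
    Sym2.map (reflect A k) (Sym2.map (reflect A k) e) = e := by
  induction e using Sym2.ind with
  | h a b =>
    have := dyadicFractal.adj_bounds he
    rw [Sym2.map_mk, Sym2.map_mk, reflect_reflect ⟨by omega, by omega⟩,
      reflect_reflect ⟨by omega, by omega⟩]

lemma residual_adj_of_reflectEdges (hA : 2 ^ k ∣ A)
    (h : (residual A k (reflectEdges A k E)).Adj a b) :
    (residual A k E).Adj (reflect A k a) (reflect A k b) := by
  rw [deleteEdges_adj] at h ⊢
  exact ⟨dyadicFractal_adj_reflect hA h.1, h.2⟩

lemma residual_reflectEdges_adj (hA : 2 ^ k ∣ A) (h : (residual A k E).Adj a b) :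
    (residual A k (reflectEdges A k E)).Adj (reflect A k a) (reflect A k b) := by
  rw [deleteEdges_adj] at h ⊢
  refine ⟨dyadicFractal_adj_reflect hA h.1, fun he => h.2 ?_⟩
  rw [← map_reflect_map_reflect (e := s(a, b)) h.1]
  exact he

lemma reachable_reflectEdges (hA : 2 ^ k ∣ A) {u v : ℕ} (h : (residual A k E).Reachable u v) :
    (residual A k (reflectEdges A k E)).Reachable (reflect A k u) (reflect A k v) :=
  h.map ⟨reflect A k, residual_reflectEdges_adj hA⟩

lemma reachable_of_reflectEdges (hA : 2 ^ k ∣ A) {u v : ℕ}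
    (h : (residual A k (reflectEdges A k E)).Reachable u v) :
    (residual A k E).Reachable (reflect A k u) (reflect A k v) :=
  h.map ⟨reflect A k, residual_adj_of_reflectEdges hA⟩

lemma hasWalkWithin_of_reflectEdges (hA : 2 ^ k ∣ A) {u v n : ℕ}
    (h : HasWalkWithin (residual A k (reflectEdges A k E)) u v n) :
    HasWalkWithin (residual A k E) (reflect A k u) (reflect A k v) n :=
  h.map ⟨reflect A k, residual_adj_of_reflectEdges hA⟩

lemma numDeleted_reflectEdges_le (hA : 2 ^ k ∣ A) :
    numDeleted A k (reflectEdges A k E) ≤ numDeleted A k E :=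
  ncard_le_ncard_of_injOn (Sym2.map (reflect A k))
    (fun _ he => ⟨he.1, map_reflect_mem_edgeSet hA he.2⟩)
    (LeftInvOn.injOn fun _ he => map_reflect_map_reflect he.2)
    (dyadicFractal_edgeSet_finite.inter_of_right E)

def EccentricityBound (k : ℕ) : Prop :=
  ∀ A E, 2 ^ k ∣ A → (∀ x ∈ Icc A (A + 2 ^ k), (residual A k E).Reachable A x) →
    ∀ x ∈ Icc A (A + 2 ^ k), HasWalkWithin (residual A k E) A x (k + numDeleted A k E + 1)

/-- The theorem for the block `[A, A + 2^k]`. -/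
def TwoComponentBound (k : ℕ) : Prop :=
  ∀ A E, 2 ^ k ∣ A → ¬ (residual A k E).Reachable A (A + 2 ^ k) →
    (∀ x ∈ Icc A (A + 2 ^ k),
      (residual A k E).Reachable A x ∨ (residual A k E).Reachable (A + 2 ^ k) x) →
    ∀ x ∈ Icc A (A + 2 ^ k), ∃ z, (z = A ∨ z = A + 2 ^ k) ∧
      HasWalkWithin (residual A k E) z x (k + numDeleted A k E - 1)

lemma eq_or_eq_of_mem_Icc_zero (hx : x ∈ Icc A (A + 2 ^ 0)) : x = A ∨ x = A + 2 ^ 0 := by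
  have := hx.1
  have := hx.2
  rw [pow_zero] at *
  omega

lemma eccentricityBound_zero : EccentricityBound 0 := by
  intro A E hA hconn x hx
  have htop : s(A, A + 2 ^ 0) ∉ E := fun htop =>
    not_reachable_zero_of_top_mem htop (hconn _ ⟨by omega, le_rfl⟩)
  rcases eq_or_eq_of_mem_Icc_zero hx with rfl | rfl
  · exact .refl _ _ _
  · exact (HasWalkWithin.of_adj (residual_adj_top hA htop)).weaken (by omega)

lemma twoComponentBound_zero : TwoComponentBound 0 := by
  intro A E _ _ _ x hx
  rcases eq_or_eq_of_mem_Icc_zero hx with rfl | rfl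
  exacts [⟨_, .inl rfl, .refl _ _ _⟩, ⟨_, .inr rfl, .refl _ _ _⟩]

lemma hasWalkWithin_of_top_mem (hS : EccentricityBound k) (hA : 2 ^ (k + 1) ∣ A)
    (htop : s(A, A + 2 ^ (k + 1)) ∈ E)
    (hconn : ∀ x ∈ Icc A (A + 2 ^ (k + 1)), (residual A (k + 1) E).Reachable A x)
    (hx : x ∈ Icc A (A + 2 ^ (k + 1))) :
    HasWalkWithin (residual A (k + 1) E) A x (k + numDeleted A (k + 1) E + 1) := by
  obtain ⟨hAk, hmk⟩ := two_pow_dvd_of_succ hA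
  have hcount := numDeleted_halves_lt hA htop
  have hconnL := reachable_left_of_connected hA htop hconn
  by_cases hxL : x ≤ A + 2 ^ k
  · exact ((hS A E hAk hconnL x ⟨hx.1, hxL⟩).mono residual_le_succ_left).weaken (by omega)
  · have hmid := hasWalkWithin_top_of_connected hAk hconnL
    have hxR : x ∈ Icc (A + 2 ^ k) (A + 2 ^ k + 2 ^ k) :=
      ⟨by omega, by have := hx.2; rw [Nat.two_pow_succ] at this; omega⟩
    have hR := hS _ E hmk (reachable_right_of_connected hA htop hconn) x hxR
    exact ((hmid.mono residual_le_succ_left).trans (hR.mono residual_le_succ_right)).weaken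
      (by omega)

/-- Deleting a surviving top edge either keeps the graph connected or produces the two-component
situation at the same level, with one more deleted edge. -/
lemma eccentricityBound_succ (hS : EccentricityBound k) (hM : TwoComponentBound (k + 1)) :
    EccentricityBound (k + 1) := by
  intro A E hA hconn x hx
  by_cases htop : s(A, A + 2 ^ (k + 1)) ∈ E
  · exact (hasWalkWithin_of_top_mem hS hA htop hconn hx).weaken (by omega)
  set E' := insert s(A, A + 2 ^ (k + 1)) E
  have htop' : s(A, A + 2 ^ (k + 1)) ∈ E' := mem_insert _ _
  have hcount : numDeleted A (k + 1) E' = numDeleted A (k + 1) E + 1 :=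
    numDeleted_insert_top hA htop
  have hle : residual A (k + 1) E' ≤ residual A (k + 1) E := deleteEdges_anti (subset_insert _ _)
  have hsplit : ∀ y ∈ Icc A (A + 2 ^ (k + 1)), (residual A (k + 1) E').Reachable A y ∨
      (residual A (k + 1) E').Reachable (A + 2 ^ (k + 1)) y := by
    intro y hy
    have := (hconn y hy).deleteEdges_singleton_or (p := A) (p' := A + 2 ^ (k + 1))
    rw [deleteEdges_deleteEdges, union_singleton] at this
    tauto
  by_cases hAτ : (residual A (k + 1) E').Reachable A (A + 2 ^ (k + 1))
  · have hconn' : ∀ y ∈ Icc A (A + 2 ^ (k + 1)), (residual A (k + 1) E').Reachable A y :=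
      fun y hy => (hsplit y hy).elim id hAτ.trans
    exact ((hasWalkWithin_of_top_mem hS hA htop' hconn' hx).mono hle).weaken
      (by omega)
  · obtain ⟨z, rfl | rfl, hw⟩ := hM A E' hA hAτ hsplit x hx
    · exact (hw.mono hle).weaken (by omega)
    · exact ((HasWalkWithin.of_adj (residual_adj_top hA htop)).trans (hw.mono hle)).weaken
        (by omega)

lemma twoComponentBound_succ_of_reachable_mid (hM : TwoComponentBound k)
    (hS : EccentricityBound k) (hA : 2 ^ (k + 1) ∣ A)
    (hcut : ¬ (residual A (k + 1) E).Reachable A (A + 2 ^ (k + 1)))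
    (htwo : ∀ x ∈ Icc A (A + 2 ^ (k + 1)), (residual A (k + 1) E).Reachable A x ∨
      (residual A (k + 1) E).Reachable (A + 2 ^ (k + 1)) x)
    (hmid : (residual A (k + 1) E).Reachable A (A + 2 ^ k))
    (hx : x ∈ Icc A (A + 2 ^ (k + 1))) :
    ∃ z, (z = A ∨ z = A + 2 ^ (k + 1)) ∧
      HasWalkWithin (residual A (k + 1) E) z x (k + 1 + numDeleted A (k + 1) E - 1) := by
  obtain ⟨hAk, hmk⟩ := two_pow_dvd_of_succ hA
  have htop : s(A, A + 2 ^ (k + 1)) ∈ E :=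
    by_contra fun h => hcut (residual_adj_top hA h).reachable
  have hcount := numDeleted_halves_lt hA htop
  have hpos := Nat.two_pow_pos k
  rw [Nat.two_pow_succ, ← add_assoc] at hcut htwo hx ⊢
  have hconnL : ∀ y ∈ Icc A (A + 2 ^ k), (residual A k E).Reachable A y := by
    intro y hy
    rcases htwo y ⟨hy.1, by have := hy.2; omega⟩ with h | h
    · exact (reachable_left_of_reachable hA htop h hy).1 ⟨le_rfl, by omega⟩
    · have hmy := (reachable_left_of_reachable hA htop h hy).2 fun h' => by have := h'.2; omega
      exact absurd (hmid.trans ((hmy.mono residual_le_succ_left).trans h.symm)) hcut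
  by_cases hxL : x ≤ A + 2 ^ k
  · exact ⟨A, .inl rfl,
      ((hS A E hAk hconnL x ⟨hx.1, hxL⟩).mono residual_le_succ_left).weaken (by omega)⟩
  have hcutR : ¬ (residual (A + 2 ^ k) k E).Reachable (A + 2 ^ k) (A + 2 ^ k + 2 ^ k) :=
    fun h => hcut (hmid.trans (h.mono residual_le_succ_right))
  have htwoR : ∀ y ∈ Icc (A + 2 ^ k) (A + 2 ^ k + 2 ^ k),
      (residual (A + 2 ^ k) k E).Reachable (A + 2 ^ k) y ∨
        (residual (A + 2 ^ k) k E).Reachable (A + 2 ^ k + 2 ^ k) y := by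
    intro y hy
    refine (htwo y ⟨by have := hy.1; omega, hy.2⟩).imp (fun h => ?_) (fun h => ?_)
    · exact (reachable_right_of_reachable hA htop h hy).2 fun h' => by have := h'.1; omega
    · exact (reachable_right_of_reachable hA htop h hy).1 ⟨by omega, le_rfl⟩
  obtain ⟨z, rfl | rfl, hw⟩ := hM _ E hmk hcutR htwoR x ⟨by omega, hx.2⟩
  · have hL := hasWalkWithin_top_of_connected hAk hconnL
    exact ⟨A, .inl rfl,
      ((hL.mono residual_le_succ_left).trans (hw.mono residual_le_succ_right)).weaken (by omega)⟩
  · exact ⟨_, .inr rfl, (hw.mono residual_le_succ_right).weaken (by omega)⟩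

lemma twoComponentBound_succ (hM : TwoComponentBound k) (hS : EccentricityBound k) :
    TwoComponentBound (k + 1) := by
  intro A E hA hcut htwo x hx
  have hmid : A + 2 ^ k ∈ Icc A (A + 2 ^ (k + 1)) :=
    ⟨by omega, by rw [Nat.two_pow_succ]; omega⟩
  rcases htwo _ hmid with hmid | hmid
  · exact twoComponentBound_succ_of_reachable_mid hM hS hA hcut htwo hmid hx
  -- the reflection exchanging `σ` and `τ` puts the midpoint on the side of `σ`
  have hcut' :
      ¬ (residual A (k + 1) (reflectEdges A (k + 1) E)).Reachable A (A + 2 ^ (k + 1)) := fun h =>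
    hcut (by simpa only [reflect_left, reflect_right] using (reachable_of_reflectEdges hA h).symm)
  have htwo' : ∀ y ∈ Icc A (A + 2 ^ (k + 1)),
      (residual A (k + 1) (reflectEdges A (k + 1) E)).Reachable A y ∨
        (residual A (k + 1) (reflectEdges A (k + 1) E)).Reachable (A + 2 ^ (k + 1)) y := by
    intro y hy
    have := (htwo _ (reflect_mem_Icc hy)).symm.imp (reachable_reflectEdges hA)
      (reachable_reflectEdges hA)
    rwa [reflect_left, reflect_right, reflect_reflect hy] at this
  have hmid' := reachable_reflectEdges hA hmid
  rw [reflect_right, reflect_succ_mid] at hmid'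
  obtain ⟨z, hz, hw⟩ :=
    twoComponentBound_succ_of_reachable_mid hM hS hA hcut' htwo' hmid' (reflect_mem_Icc hx)
  have hw' := hasWalkWithin_of_reflectEdges hA hw
  rw [reflect_reflect hx] at hw'
  have hcount := numDeleted_reflectEdges_le (E := E) hA
  refine ⟨reflect A (k + 1) z, ?_, hw'.weaken (by omega)⟩
  rcases hz with rfl | rfl
  exacts [.inr reflect_left, .inl reflect_right]

theorem twoComponentBound (k : ℕ) : TwoComponentBound k := by
  suffices EccentricityBound k ∧ TwoComponentBound k from this.2
  induction k with
  | zero => exact ⟨eccentricityBound_zero, twoComponentBound_zero⟩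
  | succ k ih =>
    have hM := twoComponentBound_succ ih.2 ih.1
    exact ⟨eccentricityBound_succ ih.1 hM, hM⟩

/-- Under `Fin.val`, `△_q − D` is `dyadicFractal 0 q − natEdges D`. -/
def natEdges {q : ℕ} (D : Set (Sym2 (Fin (2 ^ q + 1)))) : Set (Sym2 ℕ) := Sym2.map Fin.val '' D

section Transfer

variable {q : ℕ} {D : Set (Sym2 (Fin (2 ^ q + 1)))}

lemma fracAdjAux_iff_dyadicStep (hb : b ≤ 2 ^ q) : fracAdjAux q a b ↔ dyadicStep 0 q a b := by
  constructor
  · rintro ⟨i, hi, hdvd, rfl⟩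
    exact ⟨q - i, by omega, hdvd, rfl, by omega, by omega⟩
  · rintro ⟨j, hj, hdvd, rfl, -, -⟩
    exact ⟨q - j, by omega, by rwa [Nat.sub_sub_self hj], by rw [Nat.sub_sub_self hj]⟩

lemma tFractal_deleteEdges_adj_iff {u v : Fin (2 ^ q + 1)} :
    ((TFractal q).deleteEdges D).Adj u v ↔ (residual 0 q (natEdges D)).Adj u v := by
  have hmem : s((u : ℕ), v) ∈ natEdges D ↔ s(u, v) ∈ D :=
    (Sym2.map.injective Fin.val_injective).mem_set_image (s := D) (a := s(u, v))
  rw [deleteEdges_adj, deleteEdges_adj, hmem]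
  exact and_congr_left' (or_congr (fracAdjAux_iff_dyadicStep (Nat.lt_succ_iff.mp v.isLt))
    (fracAdjAux_iff_dyadicStep (Nat.lt_succ_iff.mp u.isLt)))

lemma reachable_natEdges {u v : Fin (2 ^ q + 1)} (h : ((TFractal q).deleteEdges D).Reachable u v) :
    (residual 0 q (natEdges D)).Reachable u v :=
  h.map ⟨Fin.val, tFractal_deleteEdges_adj_iff.mp⟩

lemma hasWalkWithin_of_natEdges {u v : Fin (2 ^ q + 1)} {n : ℕ}
    (h : HasWalkWithin (residual 0 q (natEdges D)) u v n) :
    HasWalkWithin ((TFractal q).deleteEdges D) u v n :=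
  h.of_map Fin.val_injective fun a y hay => by
    have := dyadicFractal.adj_bounds ((deleteEdges_adj ..).mp hay).1
    exact ⟨⟨y, by omega⟩, rfl, tFractal_deleteEdges_adj_iff.mpr hay⟩

lemma numDeleted_natEdges_le : numDeleted 0 q (natEdges D) ≤ D.ncard :=
  (ncard_le_ncard inter_subset_left ((toFinite D).image _)).trans (ncard_image_le (toFinite D))

end Transfer

end TFractal

theorem tfractal_two_components_distance_bound_general (q : ℕ)
    (D : Set (Sym2 (Fin (2 ^ q + 1))))
    (hcut : ¬ ((TFractal q).deleteEdges D).Reachable (sigV q) (tauV q))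
    (htwo : ∀ x : Fin (2 ^ q + 1),
      ((TFractal q).deleteEdges D).Reachable (sigV q) x ∨
        ((TFractal q).deleteEdges D).Reachable (tauV q) x) :
    ∀ x : Fin (2 ^ q + 1), ∃ z : Fin (2 ^ q + 1), (z = sigV q ∨ z = tauV q) ∧
      ((TFractal q).deleteEdges D).Reachable z x ∧
        ((TFractal q).deleteEdges D).dist z x ≤ q + D.ncard - 1 := by
  intro x
  have hbound := TFractal.twoComponentBound q 0 (TFractal.natEdges D) (dvd_zero _)
  simp only [zero_add] at hbound
  obtain ⟨z, hz, hw⟩ := hbound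
    (fun ⟨p⟩ => hcut (TFractal.hasWalkWithin_of_natEdges (u := sigV q) (v := tauV q)
      ⟨p, le_rfl⟩).reachable)
    (fun y hy => (htwo ⟨y, by have := hy.2; omega⟩).imp
      TFractal.reachable_natEdges TFractal.reachable_natEdges)
    x ⟨Nat.zero_le _, by have := x.isLt; omega⟩
  obtain ⟨z, rfl, hz'⟩ :
      ∃ z' : Fin (2 ^ q + 1), (z' : ℕ) = z ∧ (z' = sigV q ∨ z' = tauV q) := by
    rcases hz with rfl | rfl
    exacts [⟨sigV q, rfl, .inl rfl⟩, ⟨tauV q, rfl, .inr rfl⟩]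
  have hw' := TFractal.hasWalkWithin_of_natEdges hw
  have hcount := TFractal.numDeleted_natEdges_le (D := D)
  exact ⟨z, hz', hw'.reachable, hw'.dist_le.trans (by omega)⟩

/-- if `△_q − D` has exactly two connected components, with `σ` and `τ`
in different components, then every vertex `x` satisfies
`min(dist(σ,x), dist(τ,x)) ≤ q + |D| − 1`, the distance being taken in the component
containing `x` (i.e. to whichever of `σ`, `τ` is reachable from `x`). -/
theorem tfractal_two_components_distance_bound (q : ℕ)
    (D : Set (Sym2 (Fin (2 ^ q + 1)))) (hD : D ⊆ (TFractal q).edgeSet)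
    (hcut : ¬ ((TFractal q).deleteEdges D).Reachable (sigV q) (tauV q))
    (htwo : ∀ x : Fin (2 ^ q + 1),
      ((TFractal q).deleteEdges D).Reachable (sigV q) x ∨
        ((TFractal q).deleteEdges D).Reachable (tauV q) x) :
    ∀ x : Fin (2 ^ q + 1), ∃ z : Fin (2 ^ q + 1), (z = sigV q ∨ z = tauV q) ∧
      ((TFractal q).deleteEdges D).Reachable z x ∧
        ((TFractal q).deleteEdges D).dist z x ≤ q + D.ncard - 1 :=
  tfractal_two_components_distance_bound_general q D hcut htwo
end

section
/- Let D be a set of arcs of the directed q-T-fractal and let x be any vertex reachable from σ after removing D. Then the length of a shortest directed σ-x path after removing D is at most q + |D| + 1. -/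
/-- The directed `q`-T-fractal: each boundary path is oriented from `σ` towards `τ`,
i.e. every arc goes from `a` to `a + 2^(q-i)`. -/
def DFractal (q : ℕ) : Fin (2 ^ q + 1) → Fin (2 ^ q + 1) → Prop :=
  fun a b => fracAdjAux q a.val b.val

/-! The directed `(k+1)`-fractal on `[s, s + 2^(k+1)]` consists of the `k`-fractals on `[s, m]`
and `[m, s + 2^(k+1)]`, `m = s + 2^k`, plus the top arc `(s, s + 2^(k+1))`; since an arc
`a → a + 2^j` starts at a multiple of `2^j`, no other arc jumps over `m`. So a path from `s`
past `m` either is the top arc or passes through `m`. Induction on `k` then shows that the top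
vertex is reached within `|D| + 1` steps (the top arc, or, if it is deleted, a path through `m`,
the deleted top arc paying for the extra step), and any vertex within `k + |D| + 1` steps (stay
in the left copy, or reach `m` within `|D_left| + 1` steps and recurse into the right copy). -/

open Relation
open scoped SetRel

theorem Relation.ReflTransGen.mem_or_crossing {α : Type*} [LinearOrder α] {R : α → α → Prop}
    {a m x : α} (h : ReflTransGen R a x) (ham : a ≤ m) (hmx : m < x) :
    (ReflTransGen R a m ∧ ReflTransGen R m x) ∨
      ∃ y z, ReflTransGen R a y ∧ R y z ∧ ReflTransGen R z x ∧ y < m ∧ m < z := by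
  induction h with
  | refl => exact absurd hmx (not_lt.2 ham)
  | @tail y z hay hyz ih =>
    rcases lt_trichotomy y m with hym | rfl | hmy
    · exact .inr ⟨y, z, hay, hyz, .refl, hym, hmx⟩
    · exact .inl ⟨hay, .single hyz⟩
    · rcases ih hmy with ⟨ham', hmy'⟩ | ⟨u, v, hau, huv, hvy, hum, hmv⟩
      · exact .inl ⟨ham', hmy'.tail hyz⟩
      · exact .inr ⟨u, v, hau, huv, hvy.tail hyz, hum, hmv⟩

lemma RelSeries.exists_of_mem {α : Type*} {r : SetRel α α} {a b : α} (h : a ~[r] b) :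
    ∃ p : RelSeries r, p.head = a ∧ p.last = b ∧ p.length = 1 :=
  ⟨⟨1, ![a, b], Fin.forall_fin_one.2 h⟩, rfl, rfl, rfl⟩

namespace TFractal

/-- All directed T-fractals sit inside this relation on `ℕ`: the directed `q`-T-fractal is its
restriction to `[0, 2^q]`, and its subfractals are the restrictions to the intervals
`[s, s + 2^k]` with `2^k ∣ s`. -/
def arcs : SetRel ℕ ℕ := {p | ∃ j, 2 ^ j ∣ p.1 ∧ p.2 = p.1 + 2 ^ j}

lemma mem_arcs {a b : ℕ} : (a, b) ∈ arcs ↔ ∃ j, 2 ^ j ∣ a ∧ b = a + 2 ^ j := Iff.rfl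

lemma lt_of_mem_arcs {a b : ℕ} (h : (a, b) ∈ arcs) : a < b := by
  obtain ⟨j, -, rfl⟩ := mem_arcs.1 h
  exact Nat.lt_add_of_pos_right (Nat.two_pow_pos j)

lemma two_pow_succ_le_sub_of_mem_arcs {y z m k : ℕ} (h : (y, z) ∈ arcs) (hym : y < m)
    (hmz : m < z) (hm : 2 ^ k ∣ m) : 2 ^ (k + 1) ≤ z - y := by
  obtain ⟨j, hj, rfl⟩ := mem_arcs.1 h
  rw [Nat.add_sub_cancel_left]
  by_contra! hlt
  have hjk : j ≤ k := Nat.lt_succ_iff.1 ((Nat.pow_lt_pow_iff_right (by norm_num)).1 hlt)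
  have hdvd : 2 ^ j ∣ m - y := Nat.dvd_sub ((pow_dvd_pow 2 hjk).trans hm) hj
  have := Nat.le_of_dvd (by omega) hdvd
  omega

variable {D : SetRel ℕ ℕ}

lemma le_of_reflTransGen {a b : ℕ} (h : ReflTransGen (· ~[arcs \ D] ·) a b) : a ≤ b := by
  induction h with
  | refl => exact le_rfl
  | tail _ hbc ih => exact ih.trans (lt_of_mem_arcs hbc.1).le

lemma mem_of_reflTransGen_add_one {s : ℕ} (h : ReflTransGen (· ~[arcs \ D] ·) s (s + 1)) :
    (s, s + 1) ∈ arcs \ D := by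
  obtain h | ⟨c, hsc, hc⟩ := h.cases_tail
  · omega
  · obtain rfl : c = s := by
      have := le_of_reflTransGen hsc
      have := lt_of_mem_arcs hc.1
      omega
    exact hc

lemma reflTransGen_split_at_midpoint {k s x : ℕ} (hs : 2 ^ (k + 1) ∣ s)
    (h : ReflTransGen (· ~[arcs \ D] ·) s x) (hmx : s + 2 ^ k < x) (hx : x ≤ s + 2 ^ (k + 1)) :
    (x = s + 2 ^ (k + 1) ∧ (s, x) ∈ arcs \ D) ∨
      (ReflTransGen (· ~[arcs \ D] ·) s (s + 2 ^ k) ∧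
        ReflTransGen (· ~[arcs \ D] ·) (s + 2 ^ k) x) := by
  rcases h.mem_or_crossing (by omega) hmx with hmid | ⟨y, z, hsy, hyz, hzx, hym, hmz⟩
  · exact .inr hmid
  · have hm : 2 ^ k ∣ s + 2 ^ k := dvd_add ((pow_dvd_pow 2 k.le_succ).trans hs) dvd_rfl
    have hjump := two_pow_succ_le_sub_of_mem_arcs hyz.1 hym hmz hm
    have := le_of_reflTransGen hsy
    have := le_of_reflTransGen hzx
    obtain rfl : y = s := by omega
    obtain rfl : z = x := by omega
    exact .inl ⟨by omega, hyz⟩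

/-- Deleted arcs with both ends in `[s, t]`; a pair `(a, b)` is counted in `[s, t)` × `(s, t]`,
so that the counts for `[s, m]` and `[m, t]` concern disjoint sets. -/
noncomputable def deletedIn (D : SetRel ℕ ℕ) (s t : ℕ) : ℕ :=
  (D ∩ Set.Ico s t ×ˢ Set.Ioc s t).ncard

lemma deletedIn_le_ncard (hD : D.Finite) (s t : ℕ) : deletedIn D s t ≤ D.ncard :=
  Set.ncard_le_ncard Set.inter_subset_left hD

lemma deletedIn_add_deletedIn_eq {s m t : ℕ} :
    deletedIn D s m + deletedIn D m t =
      (D ∩ Set.Ico s m ×ˢ Set.Ioc s m ∪ D ∩ Set.Ico m t ×ˢ Set.Ioc m t).ncard := by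
  refine (Set.ncard_union_eq ?_).symm
  rw [Set.disjoint_left]
  rintro p ⟨-, ⟨-, hp⟩, -⟩ ⟨-, ⟨hp', -⟩, -⟩
  exact absurd hp' (not_le.2 hp)

lemma union_subset_box {s m t : ℕ} (hsm : s ≤ m) (hmt : m ≤ t) :
    D ∩ Set.Ico s m ×ˢ Set.Ioc s m ∪ D ∩ Set.Ico m t ×ˢ Set.Ioc m t ⊆
      D ∩ Set.Ico s t ×ˢ Set.Ioc s t := by
  rintro p (⟨hD, ⟨h1, h1'⟩, h2, h2'⟩ | ⟨hD, ⟨h1, h1'⟩, h2, h2'⟩) <;>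
    exact ⟨hD, ⟨by omega, by omega⟩, by omega, by omega⟩

lemma deletedIn_add_le {s m t : ℕ} (hsm : s ≤ m) (hmt : m ≤ t) :
    deletedIn D s m + deletedIn D m t ≤ deletedIn D s t := by
  rw [deletedIn_add_deletedIn_eq]
  exact Set.ncard_le_ncard (union_subset_box hsm hmt)

lemma deletedIn_add_lt {s m t : ℕ} (hsm : s < m) (hmt : m < t) (hst : (s, t) ∈ D) :
    deletedIn D s m + deletedIn D m t < deletedIn D s t := by
  rw [deletedIn_add_deletedIn_eq]
  refine Set.ncard_lt_ncard ((Set.ssubset_iff_of_subset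
    (union_subset_box hsm.le hmt.le)).2 ⟨(s, t), ⟨hst, ⟨le_rfl, by omega⟩, by omega, le_rfl⟩, ?_⟩)
  rintro (⟨-, -, -, h⟩ | ⟨-, ⟨h, -⟩, -⟩) <;> simp only at h <;> omega

lemma exists_relSeries_of_reflTransGen_top (k : ℕ) {s : ℕ} (hs : 2 ^ k ∣ s)
    (h : ReflTransGen (· ~[arcs \ D] ·) s (s + 2 ^ k)) :
    ∃ p : RelSeries (arcs \ D), p.head = s ∧ p.last = s + 2 ^ k ∧
      p.length ≤ deletedIn D s (s + 2 ^ k) + 1 := by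
  induction k generalizing s with
  | zero =>
    obtain ⟨p, hp, hp', hpl⟩ := RelSeries.exists_of_mem (mem_of_reflTransGen_add_one h)
    exact ⟨p, hp, hp', by omega⟩
  | succ k ih =>
    have hdvd : 2 ^ k ∣ s := (pow_dvd_pow 2 k.le_succ).trans hs
    have hmid : s + 2 ^ k + 2 ^ k = s + 2 ^ (k + 1) := by ring
    by_cases hst : (s, s + 2 ^ (k + 1)) ∈ D
    · obtain ⟨-, -, hst'⟩ | ⟨hl, hr⟩ :=
        reflTransGen_split_at_midpoint hs h (by omega) le_rfl
      · exact absurd hst hst'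
      obtain ⟨p, hp, hp', hpl⟩ := ih hdvd hl
      obtain ⟨p', hq, hq', hql⟩ := ih (dvd_add hdvd dvd_rfl) (hmid ▸ hr)
      have := deletedIn_add_lt (D := D) (m := s + 2 ^ k)
        (Nat.lt_add_of_pos_right (Nat.two_pow_pos k)) (by omega) hst
      refine ⟨p.smash p' (hp'.trans hq.symm), by simp [hp], by simp [hq', hmid], ?_⟩
      rw [hmid] at hql
      simp only [RelSeries.smash_length]
      omega
    · obtain ⟨p, hp, hp', hpl⟩ :=
        RelSeries.exists_of_mem (r := arcs \ D) ⟨⟨k + 1, hs, rfl⟩, hst⟩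
      exact ⟨p, hp, hp', by omega⟩

lemma exists_relSeries_of_reflTransGen (k : ℕ) {s x : ℕ} (hs : 2 ^ k ∣ s) (hx : x ≤ s + 2 ^ k)
    (h : ReflTransGen (· ~[arcs \ D] ·) s x) :
    ∃ p : RelSeries (arcs \ D), p.head = s ∧ p.last = x ∧
      p.length ≤ k + deletedIn D s (s + 2 ^ k) + 1 := by
  induction k generalizing s x with
  | zero =>
    rcases (le_of_reflTransGen h).eq_or_lt with rfl | hsx
    · exact ⟨RelSeries.singleton _ s, by simp, by simp, by simp⟩
    · obtain rfl : x = s + 1 := by simp only [pow_zero] at hx; omega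
      obtain ⟨p, hp, hp', hpl⟩ := RelSeries.exists_of_mem (mem_of_reflTransGen_add_one h)
      exact ⟨p, hp, hp', by omega⟩
  | succ k ih =>
    have hdvd : 2 ^ k ∣ s := (pow_dvd_pow 2 k.le_succ).trans hs
    have hmid : s + 2 ^ k + 2 ^ k = s + 2 ^ (k + 1) := by ring
    have hsum := deletedIn_add_le (D := D) (m := s + 2 ^ k) (t := s + 2 ^ (k + 1))
      (Nat.le_add_right s _) (by omega)
    by_cases hxm : x ≤ s + 2 ^ k
    · obtain ⟨p, hp, hp', hpl⟩ := ih hdvd hxm h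
      exact ⟨p, hp, hp', by omega⟩
    obtain ⟨rfl, hsx⟩ | ⟨hl, hr⟩ := reflTransGen_split_at_midpoint hs h (by omega) hx
    · obtain ⟨p, hp, hp', hpl⟩ := RelSeries.exists_of_mem hsx
      exact ⟨p, hp, hp', by omega⟩
    obtain ⟨p, hp, hp', hpl⟩ := exists_relSeries_of_reflTransGen_top k hdvd hl
    obtain ⟨p', hq, hq', hql⟩ := ih (dvd_add hdvd dvd_rfl) (hx.trans_eq hmid.symm) hr
    refine ⟨p.smash p' (hp'.trans hq.symm), by simp [hp], by simp [hq'], ?_⟩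
    rw [hmid] at hql
    simp only [RelSeries.smash_length]
    omega

lemma mem_arcs_of_dFractal {q : ℕ} {a b : Fin (2 ^ q + 1)} (h : DFractal q a b) :
    (a.val, b.val) ∈ arcs := by
  obtain ⟨i, -, hi⟩ := h
  exact ⟨q - i, hi⟩

lemma dFractal_of_mem_arcs {q : ℕ} {a b : Fin (2 ^ q + 1)} (h : (a.val, b.val) ∈ arcs) :
    DFractal q a b := by
  obtain ⟨j, hj, hb⟩ := mem_arcs.1 h
  have hjq : j ≤ q := (Nat.pow_le_pow_iff_right (by norm_num : 1 < 2)).1 (by omega)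
  exact ⟨q - j, Nat.sub_le q j, by rw [Nat.sub_sub_self hjq]; exact ⟨hj, hb⟩⟩

end TFractal

open TFractal

/-- if `D` is a set of arcs of the directed `q`-T-fractal and `x` is
reachable from `σ` after removing `D`, then there is a directed `σ`-`x` path of length
at most `q + |D| + 1` avoiding `D`. -/
theorem dfractal_reachable_distance_bound (q : ℕ)
    (D : Set (Fin (2 ^ q + 1) × Fin (2 ^ q + 1))) (x : Fin (2 ^ q + 1))
    (hx : Relation.ReflTransGen (fun a b => DFractal q a b ∧ (a, b) ∉ D) (sigV q) x) :
    ∃ n ≤ q + D.ncard + 1, ∃ f : Fin (n + 1) → Fin (2 ^ q + 1),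
      f 0 = sigV q ∧ f (Fin.last n) = x ∧
        ∀ i : Fin n, DFractal q (f i.castSucc) (f i.succ) ∧
          (f i.castSucc, f i.succ) ∉ D := by
  set D' : SetRel ℕ ℕ := Prod.map Fin.val Fin.val '' D
  have hval : (Prod.map Fin.val Fin.val : Fin (2 ^ q + 1) × Fin (2 ^ q + 1) → ℕ × ℕ).Injective :=
    Fin.val_injective.prodMap Fin.val_injective
  have hreach : ReflTransGen (· ~[arcs \ D'] ·) 0 x :=
    hx.lift Fin.val fun a b hab => ⟨mem_arcs_of_dFractal hab.1, hval.mem_set_image.not.2 hab.2⟩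
  obtain ⟨p, hp, hp', hlen⟩ :=
    exists_relSeries_of_reflTransGen q (dvd_zero _) (by simpa using x.is_le) hreach
  have hcard : deletedIn D' 0 (0 + 2 ^ q) ≤ D.ncard :=
    (deletedIn_le_ncard (D.toFinite.image _) _ _).trans (Set.ncard_image_le D.toFinite)
  have hmono : StrictMono p := Fin.strictMono_iff_lt_succ.2 fun i => lt_of_mem_arcs (p.step i).1
  refine ⟨p.length, by omega, fun i => ⟨p i, ?_⟩, Fin.ext hp, Fin.ext hp', fun i =>
    ⟨dFractal_of_mem_arcs (p.step i).1, fun hi => (p.step i).2 (hval.mem_set_image.2 hi)⟩⟩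
  exact (hmono.monotone (Fin.le_last i)).trans_lt (by rw [p.apply_last, hp']; exact x.is_lt)
end
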